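/- arXiv:1710.02956 — 7 statements merged into one kernel-verified Lean document; each statement's English description precedes it below -/
import Mathlib

section
/- For every k ∈ ℕ and every set S of positive integers, the exponential generating function of the generalized Stirling numbers of the second kind satisfies ∑_{n≥0} {n,k}_S z^n/n! = (1/k!)·(∑_{s∈S} z^s/s!)^k as formal power series over ℚ; that is, PowerSeries.mk (fun n => ({n,k}_S : ℚ)/n!) = ((k! : ℚ))⁻¹ • (PowerSeries.mk (fun s => if s ∈ S then ((s! : ℚ))⁻¹ else 0))^k. -/
/-!
Both sides count maps `f : Fin n → Fin k` all of whose fibers have size in `S`. Removing the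
fiber of the last colour, a set of size `j ∈ S` chosen in `n.choose j` ways, gives a recursion in
`k` that is exactly the convolution of exponential generating functions, so the count is
`n!` times the `n`-th coefficient of `(∑_{s ∈ S} z^s/s!)^k`. Since `0 ∉ S`, such maps are
surjective, and forgetting the labels of the fibers is a `k!`-to-one map onto the partitions of
`Fin n` into `k` blocks with sizes in `S`.
-/

noncomputable def stirling2 (S : Set ℕ) (n k : ℕ) : ℕ :=
  Nat.card {P : Finpartition (Finset.univ : Finset (Fin n)) //
    P.parts.card = k ∧ ∀ p ∈ P.parts, p.card ∈ S}

open Finset Function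

namespace Finpartition

variable {α β : Type*} [DecidableEq α]

lemma mem_parts_iff_exists_part_eq {s t : Finset α} (P : Finpartition s) :
    t ∈ P.parts ↔ ∃ a ∈ s, P.part a = t :=
  ⟨fun ht => P.part_surjOn ht, by rintro ⟨a, ha, rfl⟩; exact P.part_mem.2 ha⟩

variable [Fintype α] [DecidableEq β]

lemma ext_part {P Q : Finpartition (univ : Finset α)} (h : ∀ a, P.part a = Q.part a) : P = Q := by
  ext t
  simp only [mem_parts_iff_exists_part_eq, h]

lemma part_ofSetoid_ker (f : α → β) (a : α) :
    (ofSetoid (Setoid.ker f)).part a = ({a' | f a' = f a} : Finset α) := by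
  ext a'
  rw [mem_part_ofSetoid_iff_rel, mem_filter_univ, eq_comm]
  rfl

lemma part_eq_filter_of_ofSetoid_ker_eq {f : α → β} {P : Finpartition (univ : Finset α)}
    (hP : ofSetoid (Setoid.ker f) = P) (a : α) :
    P.part a = ({a' | f a' = f a} : Finset α) :=
  hP ▸ part_ofSetoid_ker f a

lemma filter_symm_part_eq {P : Finpartition (univ : Finset α)} (e : β ≃ P.parts) (b : β) :
    ({a | e.symm ⟨P.part a, P.part_mem.2 (mem_univ a)⟩ = b} : Finset α) = e b := by
  ext a
  rw [mem_filter_univ, Equiv.symm_apply_eq, Subtype.ext_iff, P.part_eq_iff_mem (e b).2]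

end Finpartition

section Surjections

variable {α β : Type*} [Fintype α] [DecidableEq β]

lemma Function.Surjective.injective_filter_eq {f : α → β} (hf : Surjective f) :
    Injective fun b => ({a | f a = b} : Finset α) := by
  intro b b' h
  obtain ⟨a, rfl⟩ := hf b
  have ha : a ∈ ({a' | f a' = f a} : Finset α) := by simp
  simpa [h] using ha

variable [DecidableEq α]

noncomputable def surjectiveKerEquiv (P : Finpartition (univ : Finset α)) :
    {f : α → β // Surjective f ∧ Finpartition.ofSetoid (Setoid.ker f) = P} ≃ (β ≃ P.parts) where
  toFun f := Equiv.ofBijective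
    (fun b => ⟨({a | f.1 a = b} : Finset α), by
      obtain ⟨a, rfl⟩ := f.2.1 b
      rw [← Finpartition.part_eq_filter_of_ofSetoid_ker_eq f.2.2]
      exact P.part_mem.2 (mem_univ a)⟩)
    ⟨fun b b' h => f.2.1.injective_filter_eq (congrArg Subtype.val h), by
      rintro ⟨t, ht⟩
      obtain ⟨a, -, rfl⟩ := P.mem_parts_iff_exists_part_eq.1 ht
      exact ⟨f.1 a, Subtype.ext (Finpartition.part_eq_filter_of_ofSetoid_ker_eq f.2.2 a).symm⟩⟩
  invFun e := by
    refine ⟨fun a => e.symm ⟨P.part a, P.part_mem.2 (mem_univ a)⟩, fun b => ?_,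
      Finpartition.ext_part fun a => ?_⟩
    · obtain ⟨a, ha⟩ := P.nonempty_of_mem_parts (e b).2
      rw [← Finpartition.filter_symm_part_eq e b, mem_filter_univ] at ha
      exact ⟨a, ha⟩
    · rw [Finpartition.part_ofSetoid_ker, Finpartition.filter_symm_part_eq]
      simp
  left_inv f := by
    ext a : 2
    rw [Equiv.symm_apply_eq, Subtype.ext_iff]
    exact Finpartition.part_eq_filter_of_ofSetoid_ker_eq f.2.2 a
  right_inv e := by
    ext b : 2
    exact Finpartition.filter_symm_part_eq e b

lemma card_parts_ofSetoid_ker [Fintype β] {f : α → β} (hf : Surjective f) :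
    #(Finpartition.ofSetoid (Setoid.ker f)).parts = Fintype.card β := by
  rw [← Fintype.card_coe]
  exact (Fintype.card_congr (surjectiveKerEquiv _ ⟨f, hf, rfl⟩)).symm

lemma natCard_surjective_ker [Fintype β] (p : Finpartition (univ : Finset α) → Prop) :
    Nat.card {f : α → β // Surjective f ∧ p (Finpartition.ofSetoid (Setoid.ker f))} =
      (Fintype.card β).factorial *
        Nat.card {P : Finpartition (univ : Finset α) // #P.parts = Fintype.card β ∧ p P} := by
  classical
  let F (f : {f : α → β // Surjective f ∧ p (Finpartition.ofSetoid (Setoid.ker f))}) :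
      {P : Finpartition (univ : Finset α) // #P.parts = Fintype.card β ∧ p P} :=
    ⟨_, card_parts_ofSetoid_ker f.2.1, f.2.2⟩
  have card_fiber (P) : Nat.card {f // F f = P} = (Fintype.card β).factorial := by
    have e : {f // F f = P} ≃ (β ≃ P.1.parts) :=
      (Equiv.subtypeEquivRight fun f => Subtype.ext_iff).trans <|
        (Equiv.subtypeSubtypeEquivSubtypeInter _
          fun f => Finpartition.ofSetoid (Setoid.ker f) = P.1).trans <|
        (Equiv.subtypeEquivRight fun f =>
          ⟨fun h => ⟨h.1.1, h.2⟩, fun h => ⟨⟨h.1, h.2 ▸ P.2.2⟩, h.2⟩⟩).trans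
        (surjectiveKerEquiv P.1)
    rw [Nat.card_congr e, Nat.card_eq_fintype_card,
      Fintype.card_equiv (Fintype.equivOfCardEq (by rw [Fintype.card_coe, P.2.1]))]
  rw [← Nat.card_congr (Equiv.sigmaFiberEquiv F), Nat.card_sigma,
    sum_congr rfl fun P _ => card_fiber P, sum_const, card_univ, smul_eq_mul,
    Nat.card_eq_fintype_card, mul_comm]

end Surjections

section NoneFiber

variable {α β : Type*} [Fintype α] [DecidableEq α]

def noneFiberEquiv (A : Finset α) :
    {f : α → Option β // ({a | f a = none} : Finset α) = A} ≃ ({a // a ∉ A} → β) where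
  toFun f a := (f.1 a).get <| Option.isSome_iff_ne_none.2 fun h => a.2 <| by
    have ha : a.1 ∈ ({a | f.1 a = none} : Finset α) := by simpa using h
    rwa [f.2] at ha
  invFun g := ⟨fun a => if h : a ∈ A then none else some (g ⟨a, h⟩), by
    ext a; by_cases a ∈ A <;> simp [*]⟩
  left_inv f := by
    ext a : 2
    by_cases ha : a ∈ A
    · have hfa := ha
      rw [← f.2, mem_filter_univ] at hfa
      simp [ha, hfa]
    · simp [ha]
  right_inv g := by
    funext a
    simp [a.2]

lemma noneFiberEquiv_symm_apply (A : Finset α) (g : {a // a ∉ A} → β) (a : α) :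
    ((noneFiberEquiv A).symm g).1 a = if h : a ∈ A then none else some (g ⟨a, h⟩) :=
  rfl

lemma card_filter_noneFiberEquiv_symm [DecidableEq β] (A : Finset α) (g : {a // a ∉ A} → β)
    (b : β) : #{a | ((noneFiberEquiv A).symm g).1 a = some b} = #{a | g a = b} := by
  symm
  apply card_bij (fun a _ => a.1)
  · intro a ha
    simpa [noneFiberEquiv_symm_apply, a.2] using ha
  · intro a _ a' _
    exact Subtype.ext
  · intro a ha
    by_cases h : a ∈ A
    · simp [noneFiberEquiv_symm_apply, h] at ha
    · exact ⟨⟨a, h⟩, by simpa [noneFiberEquiv_symm_apply, h] using ha, rfl⟩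

end NoneFiber

section FiberCards

variable {S : Set ℕ} {α α' β β' : Type*} [Fintype α] [Fintype α'] [DecidableEq β] [DecidableEq β']

def HasFiberCardsIn (S : Set ℕ) (f : α → β) : Prop :=
  ∀ b, #{a | f a = b} ∈ S

lemma hasFiberCardsIn_arrowCongr_iff (e₁ : α ≃ α') (e₂ : β ≃ β') {f : α → β} :
    HasFiberCardsIn S (e₁.arrowCongr e₂ f) ↔ HasFiberCardsIn S f := by
  rw [HasFiberCardsIn, ← e₂.forall_congr_right]
  refine forall_congr' fun b => ?_
  rw [card_equiv (t := {a | f a = b}) e₁.symm fun a' => by simp]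

variable [DecidableEq α]

lemma hasFiberCardsIn_iff_surjective (hS : 0 ∉ S) {f : α → β} :
    HasFiberCardsIn S f ↔
      Surjective f ∧ ∀ t ∈ (Finpartition.ofSetoid (Setoid.ker f)).parts, #t ∈ S := by
  refine ⟨fun h => ⟨fun b => ?_, fun t ht => ?_⟩, fun ⟨hf, h⟩ b => ?_⟩
  · obtain ⟨a, ha⟩ := card_pos.1 (Nat.pos_of_ne_zero fun h0 => hS (h0 ▸ h b))
    exact ⟨a, (mem_filter_univ a).1 ha⟩
  · obtain ⟨a, -, rfl⟩ := (Finpartition.mem_parts_iff_exists_part_eq _).1 ht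
    rw [Finpartition.part_ofSetoid_ker]
    exact h (f a)
  · obtain ⟨a, rfl⟩ := hf b
    rw [← Finpartition.part_ofSetoid_ker]
    exact h _ ((Finpartition.part_mem _).2 (mem_univ a))

lemma natCard_hasFiberCardsIn_eq_factorial_mul (hS : 0 ∉ S) (k : ℕ) :
    Nat.card {f : α → Fin k // HasFiberCardsIn S f} =
      k.factorial * Nat.card {P : Finpartition (univ : Finset α) //
        #P.parts = k ∧ ∀ t ∈ P.parts, #t ∈ S} := by
  rw [Nat.card_congr (Equiv.subtypeEquivRight fun f => hasFiberCardsIn_iff_surjective hS),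
    natCard_surjective_ker (fun P => ∀ t ∈ P.parts, #t ∈ S), Fintype.card_fin]

lemma hasFiberCardsIn_noneFiberEquiv_symm_iff {A : Finset α} (hA : #A ∈ S)
    (g : {a // a ∉ A} → β) :
    HasFiberCardsIn S ((noneFiberEquiv A).symm g).1 ↔ HasFiberCardsIn S g := by
  rw [HasFiberCardsIn, Option.forall, ((noneFiberEquiv A).symm g).2]
  simp only [card_filter_noneFiberEquiv_symm, hA, true_and, HasFiberCardsIn]

lemma natCard_hasFiberCardsIn_option [Finite β] [DecidablePred (· ∈ S)] :
    Nat.card {f : α → Option β // HasFiberCardsIn S f} =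
      ∑ A : Finset α, if #A ∈ S then Nat.card {g : {a // a ∉ A} → β // HasFiberCardsIn S g}
        else 0 := by
  rw [← Nat.card_congr (Equiv.sigmaFiberEquiv
      fun f : {f : α → Option β // HasFiberCardsIn S f} => ({a | f.1 a = none} : Finset α)),
    Nat.card_sigma]
  refine sum_congr rfl fun A _ => ?_
  split_ifs with hA
  · refine Nat.card_congr <|
      (Equiv.subtypeSubtypeEquivSubtypeInter _ _).trans <|
      (Equiv.subtypeEquivRight fun f => and_comm).trans <|
      (Equiv.subtypeSubtypeEquivSubtypeInter _ _).symm.trans <|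
      (Equiv.subtypeEquiv (noneFiberEquiv A).symm fun g =>
        (hasFiberCardsIn_noneFiberEquiv_symm_iff hA g).symm).symm
  · have : IsEmpty {f : {f : α → Option β // HasFiberCardsIn S f} //
        ({a | f.1 a = none} : Finset α) = A} :=
      ⟨fun f => hA (by simpa [f.2] using f.1.2 none)⟩
    exact Nat.card_of_isEmpty

end FiberCards

section ColoringCount

open PowerSeries

variable {S : Set ℕ}

noncomputable def coloringCount (S : Set ℕ) (n k : ℕ) : ℕ :=
  Nat.card {f : Fin n → Fin k // HasFiberCardsIn S f}

lemma natCard_hasFiberCardsIn {α β : Type*} [Fintype α] [Fintype β] [DecidableEq β] :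
    Nat.card {f : α → β // HasFiberCardsIn S f} =
      coloringCount S (Fintype.card α) (Fintype.card β) :=
  Nat.card_congr <| Equiv.subtypeEquiv ((Fintype.equivFin α).arrowCongr (Fintype.equivFin β))
    fun _ => (hasFiberCardsIn_arrowCongr_iff _ _).symm

lemma coloringCount_zero_right (n : ℕ) : coloringCount S n 0 = 0 ^ n := by
  have : ∀ f : Fin n → Fin 0, HasFiberCardsIn S f := fun f b => b.elim0
  rw [coloringCount, Nat.card_congr (Equiv.subtypeUnivEquiv this), Nat.card_fun, Nat.card_fin,
    Nat.card_fin]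

lemma coloringCount_succ_right [DecidablePred (· ∈ S)] (n k : ℕ) :
    coloringCount S n (k + 1) =
      ∑ j ∈ range (n + 1), n.choose j * if j ∈ S then coloringCount S (n - j) k else 0 := by
  have h := natCard_hasFiberCardsIn (S := S) (α := Fin n) (β := Option (Fin k))
  rw [Fintype.card_fin, Fintype.card_option, Fintype.card_fin] at h
  rw [← h, natCard_hasFiberCardsIn_option, ← powerset_univ]
  simp only [natCard_hasFiberCardsIn, Fintype.card_subtype_compl, Fintype.card_coe,
    Fintype.card_fin]
  rw [sum_powerset_apply_card (fun j => if j ∈ S then coloringCount S (n - j) k else 0),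
    card_univ, Fintype.card_fin]
  simp only [smul_eq_mul]

lemma coeff_egf_pow [DecidablePred (· ∈ S)] (k n : ℕ) :
    coeff n ((mk fun s => if s ∈ S then ((s.factorial : ℚ))⁻¹ else 0) ^ k) =
      coloringCount S n k / n.factorial := by
  induction k generalizing n with
  | zero => rcases n with _ | n <;> simp [coeff_one, coloringCount_zero_right]
  | succ k ih =>
    rw [pow_succ', coeff_mul, Nat.sum_antidiagonal_eq_sum_range_succ_mk, coloringCount_succ_right]
    push_cast
    rw [sum_div]
    refine sum_congr rfl fun j hj => ?_
    simp only [coeff_mk, ih]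
    split_ifs
    · rw [Nat.cast_choose ℚ (Nat.lt_succ_iff.1 (mem_range.1 hj))]
      field_simp
    · simp

lemma coloringCount_eq_factorial_mul_stirling2 (hS : 0 ∉ S) (n k : ℕ) :
    coloringCount S n k = k.factorial * stirling2 S n k :=
  natCard_hasFiberCardsIn_eq_factorial_mul hS k

end ColoringCount

theorem statement1 (S : Set ℕ) [DecidablePred (· ∈ S)] (hS : 0 ∉ S) (k : ℕ) :
    PowerSeries.mk (fun n => (stirling2 S n k : ℚ) / n.factorial) =
      ((k.factorial : ℚ))⁻¹ •
        (PowerSeries.mk fun s => if s ∈ S then ((s.factorial : ℚ))⁻¹ else 0) ^ k := by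
  ext n
  rw [PowerSeries.coeff_mk, map_smul, smul_eq_mul, coeff_egf_pow,
    coloringCount_eq_factorial_mul_stirling2 hS]
  push_cast
  field_simp
end

section
/- For every set S of positive integers, the exponential generating function of the generalized factorial numbers satisfies ∑_{n≥0} A_{n,S} z^n/n! = exp(∑_{s∈S} z^s/s) as formal power series over ℚ; that is, PowerSeries.mk (fun n => (A_{n,S} : ℚ)/n!) equals the substitution of the power series F := PowerSeries.mk (fun s => if s ∈ S then (s : ℚ)⁻¹ else 0) (which has zero constant term since 0 ∉ S) into the exponential power series PowerSeries.exp ℚ. -/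
/-- Generalized factorial number `A_{n,S}`: the number of permutations of `{1,…,n}`
all of whose cycle lengths lie in `S` (fixed points counting as cycles of length 1). -/
noncomputable def genA (S : Set ℕ) (n : ℕ) : ℕ :=
  Nat.card {σ : Equiv.Perm (Fin n) // ∀ x, Function.minimalPeriod σ x ∈ S}

/-- Formal substitution of a power series `g` (with zero constant term) into a power
series `f`: the `n`-th coefficient of `f(g)` is `∑_{k ≤ n} (coeff k f) · (coeff n (g^k))`,
which agrees with the usual substitution of power series when `g` has zero constant term. -/
noncomputable def psSubst (g f : PowerSeries ℚ) : PowerSeries ℚ :=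
  PowerSeries.mk fun n => ∑ k ∈ Finset.range (n + 1),
    PowerSeries.coeff (R := ℚ) k f * PowerSeries.coeff (R := ℚ) n (g ^ k)

/-!
Removing the cycle through a point `ℓ` gives the recurrence
`A_{n+1,S} = ∑_{k+1 ∈ S} n (n-1) ⋯ (n-k+1) · A_{n-k,S}`: a cycle of length `k + 1` through `ℓ`
is determined by the ordered `k`-tuple of its other points, and the permutation restricted to the
remaining `n - k` points is an arbitrary one with cycle lengths in `S`. For the exponential
generating function `a` and `F = ∑_{s ∈ S} z^s / s` this says `a' = F' · a`. By the chain rule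
`exp ∘ F` satisfies the same equation, and both series have constant term `1`, so `a / exp(F)`
has derivative `0` and equals `1`.
-/

open Equiv Function Finset PowerSeries

section Permutations

variable {α : Type*}

theorem Function.Semiconj.minimalPeriod_eq {β : Type*} {f : α → β} {ga : α → α} {gb : β → β}
    (h : Semiconj f ga gb) (hf : Injective f) (x : α) :
    minimalPeriod gb (f x) = minimalPeriod ga x := by
  rw [minimalPeriod_eq_minimalPeriod_iff]
  intro n
  simp only [IsPeriodicPt, IsFixedPt, ← (h.iterate_right n).eq x, hf.eq_iff]

theorem iterate_eq_of_eqOn {f g : α → α} {s : Set α} (hg : Set.MapsTo g s s)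
    (hfg : Set.EqOn f g s) {x : α} (hx : x ∈ s) (n : ℕ) : f^[n] x = g^[n] x := by
  induction n with
  | zero => rfl
  | succ n ih => rw [iterate_succ_apply', iterate_succ_apply', ih, hfg (hg.iterate n hx)]

theorem minimalPeriod_eq_of_forall_iterate_eq {f g : α → α} {x : α}
    (h : ∀ n, f^[n] x = g^[n] x) : minimalPeriod f x = minimalPeriod g x := by
  rw [minimalPeriod_eq_minimalPeriod_iff]
  intro n
  simp only [IsPeriodicPt, IsFixedPt, h]

theorem eqOn_of_forall_iterate_eq {f g : α → α} {x : α} (h : ∀ n, f^[n] x = g^[n] x) :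
    Set.EqOn f g (Set.range fun n => g^[n] x) := by
  rintro _ ⟨n, rfl⟩
  calc f (g^[n] x) = f^[n + 1] x := by rw [iterate_succ_apply', h]
    _ = g (g^[n] x) := by rw [h, iterate_succ_apply']

theorem nodup_cons_ofFn_iterate {f : α → α} {x : α} {k : ℕ} (h : minimalPeriod f x = k + 1) :
    (x :: List.ofFn fun i : Fin k => f^[i + 1] x).Nodup := by
  have horbit : (x :: List.ofFn fun i : Fin k => f^[i + 1] x) =
      List.ofFn fun j : Fin (k + 1) => f^[j] x := by
    rw [List.ofFn_succ]
    simp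
  rw [horbit, List.nodup_ofFn]
  intro i j hij
  have hlt (j : Fin (k + 1)) : (j : ℕ) ∈ Set.Iio (minimalPeriod f x) := by
    rw [Set.mem_Iio, h]
    exact j.isLt
  exact Fin.ext (iterate_injOn_Iio_minimalPeriod (hlt i) (hlt j) hij)

theorem Equiv.Perm.apply_mem_iff_of_forall_notMem {c : Perm α} {s : Set α}
    (hc : ∀ x ∉ s, c x = x) (x : α) : c x ∈ s ↔ x ∈ s := by
  by_cases hx : x ∈ s
  · refine iff_of_true ?_ hx
    by_contra hcx
    exact hcx (by rwa [c.injective (hc _ hcx)])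
  · rw [hc x hx]

theorem Equiv.Perm.apply_mem_iff_of_eqOn {σ c : Perm α} {s : Set α} (hc : ∀ x ∉ s, c x = x)
    (hσ : Set.EqOn σ c s) (x : α) : σ x ∈ s ↔ x ∈ s := by
  have hcs := c.apply_mem_iff_of_forall_notMem hc
  refine ⟨fun hx => by_contra fun hxs => hxs ?_, fun hx => hσ hx ▸ (hcs x).2 hx⟩
  have hy : c.symm (σ x) ∈ s := (hcs _).1 (by simpa using hx)
  have : σ (c.symm (σ x)) = σ x := by rw [hσ hy, apply_symm_apply]
  exact σ.injective this ▸ hy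

def eqOnEquivPermCompl (c : Perm α) (s : Set α) [DecidablePred (· ∈ s)]
    (hc : ∀ x ∉ s, c x = x) :
    {σ : Perm α // Set.EqOn σ c s} ≃ Perm {x // x ∉ s} where
  toFun σ := σ.1.subtypePerm fun x => not_congr (σ.1.apply_mem_iff_of_eqOn hc σ.2 x)
  invFun τ := ⟨c * Perm.ofSubtype τ, fun x hx => by
    simp [Perm.ofSubtype_apply_of_not_mem τ (not_not.2 hx)]⟩
  left_inv σ := by
    ext x
    by_cases hx : x ∈ s
    · simp [Perm.ofSubtype_apply_of_not_mem (p := (· ∉ s)) _ (not_not.2 hx), σ.2 hx]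
    · have : σ.1 x ∉ s := by rwa [σ.1.apply_mem_iff_of_eqOn hc σ.2]
      simp [Perm.ofSubtype_apply_of_mem (p := (· ∉ s)) _ hx, hc _ this]
  right_inv τ := by
    ext y
    simp [Perm.ofSubtype_apply_of_mem (p := (· ∉ s)) _ y.2, hc _ (τ y).2]

section FormPerm

variable [DecidableEq α]

theorem List.minimalPeriod_formPerm {l : List α} (hl : l.Nodup) {x : α} (hx : x ∈ l) :
    minimalPeriod l.formPerm x = l.length := by
  obtain ⟨i, hi, rfl⟩ := List.getElem_of_mem hx
  have key : ∀ n, IsPeriodicPt l.formPerm n l[i] ↔ l.length ∣ n := by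
    intro n
    rw [IsPeriodicPt, IsFixedPt, Perm.iterate_eq_pow, List.formPerm_pow_apply_getElem l hl,
      hl.getElem_inj_iff, ← Nat.modEq_zero_iff_dvd]
    constructor
    · intro h
      exact Nat.ModEq.add_left_cancel' i (by rw [Nat.ModEq, h, add_zero, Nat.mod_eq_of_lt hi])
    · intro h
      have := Nat.ModEq.add_left i h
      rwa [Nat.ModEq, add_zero, Nat.mod_eq_of_lt hi] at this
  exact Nat.dvd_antisymm (((key _).2 dvd_rfl).minimalPeriod_dvd)
    ((key _).1 (isPeriodicPt_minimalPeriod _ _))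

theorem formPerm_cons_ofFn_iterate {ℓ : α} {k : ℕ} {g : Fin k → α}
    (hC : (ℓ :: List.ofFn g).Nodup) (i : Fin k) :
    (List.formPerm (ℓ :: List.ofFn g))^[i + 1] ℓ = g i := by
  have := List.formPerm_pow_apply_getElem _ hC (i + 1) 0 (by simp)
  rw [← Perm.iterate_eq_pow] at this
  simpa [Nat.mod_eq_of_lt (by omega : (i : ℕ) + 1 < k + 1)] using this

theorem eqOn_formPerm_iff {σ : Perm α} {ℓ : α} {k : ℕ} {g : Fin k → α}
    (hC : (ℓ :: List.ofFn g).Nodup) :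
    Set.EqOn σ (List.formPerm (ℓ :: List.ofFn g)) {x | x ∈ ℓ :: List.ofFn g} ↔
      minimalPeriod σ ℓ = k + 1 ∧ ∀ i : Fin k, σ^[i + 1] ℓ = g i := by
  set C := ℓ :: List.ofFn g
  have hc : minimalPeriod C.formPerm ℓ = k + 1 := by
    rw [List.minimalPeriod_formPerm hC (by simp [C])]
    simp [C]
  constructor
  · intro h
    have hmaps : Set.MapsTo C.formPerm {x | x ∈ C} {x | x ∈ C} :=
      fun x hx => List.formPerm_apply_mem_of_mem hx
    have hit := iterate_eq_of_eqOn hmaps h (show ℓ ∈ C by simp [C])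
    refine ⟨(minimalPeriod_eq_of_forall_iterate_eq hit).trans hc, fun i => ?_⟩
    rw [hit, formPerm_cons_ofFn_iterate hC]
  · rintro ⟨hσ, hg⟩
    have hit : ∀ n, σ^[n] ℓ = C.formPerm^[n] ℓ := by
      intro n
      rw [← iterate_mod_minimalPeriod_eq (f := σ),
        ← iterate_mod_minimalPeriod_eq (f := C.formPerm), hσ, hc]
      have hj : n % (k + 1) < k + 1 := Nat.mod_lt _ k.succ_pos
      generalize n % (k + 1) = j at hj ⊢
      rcases j with _ | i
      · rfl
      · exact (hg ⟨i, by omega⟩).trans (formPerm_cons_ofFn_iterate hC ⟨i, by omega⟩).symm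
    refine (eqOn_of_forall_iterate_eq hit).mono fun y hy => ?_
    simp only [Set.mem_ofPred_eq, C, List.mem_cons, List.mem_ofFn] at hy
    rcases hy with rfl | ⟨i, rfl⟩
    · exact ⟨0, rfl⟩
    · exact ⟨i + 1, formPerm_cons_ofFn_iterate hC i⟩

end FormPerm

def CycleLengthsIn (S : Set ℕ) (σ : Perm α) : Prop := ∀ x, minimalPeriod σ x ∈ S

theorem card_cycleLengthsIn_of_eqOn (S : Set ℕ) (c : Perm α) (s : Set α)
    [DecidablePred (· ∈ s)] (hc : ∀ x ∉ s, c x = x) (hcS : ∀ x ∈ s, minimalPeriod c x ∈ S) :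
    Nat.card {σ : Perm α // Set.EqOn σ c s ∧ CycleLengthsIn S σ} =
      Nat.card {τ : Perm {x // x ∉ s} // CycleLengthsIn S τ} := by
  rw [← Nat.card_congr (Equiv.subtypeSubtypeEquivSubtypeInter _ _)]
  refine Nat.card_congr ((eqOnEquivPermCompl c s hc).subtypeEquiv fun σ => ?_)
  have hsemi : Semiconj Subtype.val (eqOnEquivPermCompl c s hc σ) σ := fun _ => rfl
  constructor
  · intro h y
    rw [← hsemi.minimalPeriod_eq Subtype.val_injective]
    exact h _
  · intro h x
    by_cases hx : x ∈ s
    · have hmaps : Set.MapsTo c s s := fun y => (c.apply_mem_iff_of_forall_notMem hc y).2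
      rw [minimalPeriod_eq_of_forall_iterate_eq (iterate_eq_of_eqOn hmaps σ.2 hx)]
      exact hcS x hx
    · have hx' := h ⟨x, hx⟩
      rwa [← hsemi.minimalPeriod_eq Subtype.val_injective] at hx'

theorem card_cycleLengthsIn_eq_genA [Fintype α] (S : Set ℕ) :
    Nat.card {σ : Perm α // CycleLengthsIn S σ} = genA S (Fintype.card α) := by
  let e := Fintype.equivFin α
  refine Nat.card_congr (e.permCongr.subtypeEquiv fun σ => ?_)
  have hsemi : Semiconj e σ (e.permCongr σ) := fun x => by simp [permCongr_apply]
  simp only [CycleLengthsIn, e.surjective.forall, hsemi.minimalPeriod_eq e.injective]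

theorem card_nodup_cons_ofFn [Fintype α] (ℓ : α) (k : ℕ) :
    Nat.card {g : Fin k → α // (ℓ :: List.ofFn g).Nodup} =
      (Fintype.card α - 1).descFactorial k := by
  classical
  have hiff (g : Fin k → α) : (ℓ :: List.ofFn g).Nodup ↔ (∀ i, g i ≠ ℓ) ∧ Injective g := by
    simp [List.nodup_ofFn, eq_comm]
  let e : {g : Fin k → α // (ℓ :: List.ofFn g).Nodup} ≃ (Fin k ↪ {x // x ≠ ℓ}) :=
    { toFun g := ⟨fun i => ⟨g.1 i, ((hiff _).1 g.2).1 i⟩,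
        fun _ _ h => ((hiff _).1 g.2).2 (congrArg Subtype.val h)⟩
      invFun f := ⟨fun i => f i,
        (hiff _).2 ⟨fun i => (f i).2, fun _ _ h => f.injective (Subtype.ext h)⟩⟩
      left_inv _ := rfl
      right_inv _ := rfl }
  rw [Nat.card_congr e, Nat.card_eq_fintype_card, Fintype.card_embedding_eq, Fintype.card_fin]
  simp

theorem card_cycleLengthsIn_eqOn_formPerm [Fintype α] [DecidableEq α] (S : Set ℕ) {ℓ : α} {k : ℕ}
    {g : Fin k → α} (hC : (ℓ :: List.ofFn g).Nodup) (hk : k + 1 ∈ S) :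
    Nat.card {σ : Perm α // Set.EqOn σ (ℓ :: List.ofFn g).formPerm {x | x ∈ ℓ :: List.ofFn g} ∧
      CycleLengthsIn S σ} = genA S (Fintype.card α - (k + 1)) := by
  have hlen : Fintype.card {x // x ∈ {x | x ∈ ℓ :: List.ofFn g}} = k + 1 := by
    rw [Fintype.card_of_subtype (ℓ :: List.ofFn g).toFinset (by simp),
      List.toFinset_card_of_nodup hC]
    simp
  rw [card_cycleLengthsIn_of_eqOn S _ {x | x ∈ ℓ :: List.ofFn g}
      (fun x hx => List.formPerm_apply_of_notMem hx)
      (fun x hx => by rw [List.minimalPeriod_formPerm hC hx]; simpa using hk),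
    card_cycleLengthsIn_eq_genA, Fintype.card_subtype_compl, hlen]

theorem card_cycleLengthsIn_minimalPeriod_eq [Fintype α] (S : Set ℕ) (ℓ : α) {n k : ℕ}
    (hα : Fintype.card α = n + 1) (hk : k + 1 ∈ S) :
    Nat.card {σ : Perm α // CycleLengthsIn S σ ∧ minimalPeriod σ ℓ = k + 1} =
      n.descFactorial k * genA S (n - k) := by
  classical
  rw [Nat.card_eq_fintype_card, Fintype.card_subtype,
    card_eq_sum_card_fiberwise (f := fun (σ : Perm α) (i : Fin k) => σ^[i + 1] ℓ) (t := univ)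
      fun _ _ => mem_univ _]
  have fiber (g : Fin k → α) :
      #{σ : Perm α | (CycleLengthsIn S σ ∧ minimalPeriod σ ℓ = k + 1) ∧
        (fun i : Fin k => σ^[i + 1] ℓ) = g} =
      if (ℓ :: List.ofFn g).Nodup then genA S (n - k) else 0 := by
    split_ifs with hC
    · rw [← Fintype.card_subtype, ← Nat.card_eq_fintype_card,
        show n - k = Fintype.card α - (k + 1) by omega, ← card_cycleLengthsIn_eqOn_formPerm S hC hk]
      refine Nat.card_congr (Equiv.subtypeEquivRight fun σ => ?_)
      rw [eqOn_formPerm_iff hC, funext_iff]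
      tauto
    · rw [card_eq_zero, filter_eq_empty_iff]
      rintro σ - ⟨⟨-, hσ⟩, rfl⟩
      exact hC (nodup_cons_ofFn_iterate hσ)
  simp only [filter_filter]
  rw [sum_congr rfl fun g _ => fiber g, sum_ite, sum_const_zero, add_zero, sum_const, smul_eq_mul,
    ← Fintype.card_subtype, ← Nat.card_eq_fintype_card, card_nodup_cons_ofFn, hα,
    Nat.add_sub_cancel]

theorem card_cycleLengthsIn_eq_sum [Fintype α] (S : Set ℕ) [DecidablePred (· ∈ S)] (ℓ : α)
    {n : ℕ} (hα : Fintype.card α = n + 1) :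
    Nat.card {σ : Perm α // CycleLengthsIn S σ} = ∑ k ∈ range (n + 1),
      if k + 1 ∈ S then n.descFactorial k * genA S (n - k) else 0 := by
  classical
  rw [Nat.card_eq_fintype_card, Fintype.card_subtype,
    card_eq_sum_card_fiberwise (f := fun σ : Perm α => minimalPeriod σ ℓ) (t := range (n + 2))
      fun σ _ => mem_range.2 (Nat.lt_succ_of_le (hα ▸ minimalPeriod_le_card)),
    sum_range_succ', card_eq_zero.2, add_zero]
  · refine sum_congr rfl fun k _ => ?_
    split_ifs with hk
    · rw [filter_filter, ← Fintype.card_subtype, ← Nat.card_eq_fintype_card]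
      exact card_cycleLengthsIn_minimalPeriod_eq S ℓ hα hk
    · rw [card_eq_zero, filter_eq_empty_iff]
      intro σ hσ hℓ
      exact hk (hℓ ▸ (mem_filter.1 hσ).2 ℓ)
  · rw [filter_eq_empty_iff]
    rintro σ - h
    exact (minimalPeriod_pos_of_mem_periodicPts (σ.injective.mem_periodicPts ℓ)).ne' h

end Permutations

theorem genA_zero (S : Set ℕ) : genA S 0 = 1 := by
  simp [genA]

theorem genA_succ (S : Set ℕ) [DecidablePred (· ∈ S)] (n : ℕ) :
    genA S (n + 1) = ∑ k ∈ range (n + 1),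
      if k + 1 ∈ S then n.descFactorial k * genA S (n - k) else 0 :=
  card_cycleLengthsIn_eq_sum S (0 : Fin (n + 1)) (Fintype.card_fin _)

theorem PowerSeries.coeff_pow_eq_zero_of_lt {R : Type*} [CommSemiring R] {f : R⟦X⟧}
    (hf : constantCoeff f = 0) {m k : ℕ} (h : m < k) : coeff m (f ^ k) = 0 :=
  X_pow_dvd_iff.mp (pow_dvd_pow_of_dvd (X_dvd_iff.mpr hf) k) m h

theorem PowerSeries.eq_of_derivative_eq_mul {K : Type*} [Field K] [CharZero K] {a b g : K⟦X⟧}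
    (ha : d⁄dX K a = a * g) (hb : d⁄dX K b = b * g)
    (h0 : constantCoeff a = constantCoeff b) (hb0 : constantCoeff b ≠ 0) : a = b := by
  have hquot : a * b⁻¹ = 1 := by
    refine derivative.ext ?_ (by simp [h0, hb0])
    rw [Derivation.leibniz, derivative_inv', ha, hb, smul_eq_mul, smul_eq_mul,
      Derivation.map_one_eq_zero]
    linear_combination (-(a * b⁻¹ * g)) * PowerSeries.mul_inv_cancel b hb0
  calc a = a * b⁻¹ * b := by
        rw [mul_assoc, mul_comm b⁻¹, PowerSeries.mul_inv_cancel b hb0, mul_one]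
    _ = b := by rw [hquot, one_mul]

theorem psSubst_eq_subst {g : ℚ⟦X⟧} (hg : constantCoeff g = 0) (f : ℚ⟦X⟧) :
    psSubst g f = f.subst g := by
  ext n
  rw [psSubst, coeff_mk, coeff_subst' (HasSubst.of_constantCoeff_zero' hg),
    finsum_eq_sum_of_support_subset (s := range (n + 1))]
  · simp only [smul_eq_mul]
  · intro d hd
    by_contra hdn
    simp only [coe_range, Set.mem_Iio, not_lt] at hdn
    exact hd (by dsimp only; rw [coeff_pow_eq_zero_of_lt hg (by omega), smul_zero])

theorem constantCoeff_psSubst (g f : ℚ⟦X⟧) :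
    constantCoeff (psSubst g f) = constantCoeff f := by
  rw [← coeff_zero_eq_constantCoeff_apply, psSubst, coeff_mk]
  simp

theorem derivative_exp_subst {g : ℚ⟦X⟧} (hg : constantCoeff g = 0) :
    d⁄dX ℚ ((exp ℚ).subst g) = (exp ℚ).subst g * d⁄dX ℚ g := by
  rw [derivative_subst (HasSubst.of_constantCoeff_zero' hg), derivative_exp]

noncomputable def cycleSeries (S : Set ℕ) [DecidablePred (· ∈ S)] : ℚ⟦X⟧ :=
  PowerSeries.mk fun s => if s ∈ S then (s : ℚ)⁻¹ else 0

section CycleSeries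

variable (S : Set ℕ) [DecidablePred (· ∈ S)]

theorem constantCoeff_cycleSeries : constantCoeff (cycleSeries S) = 0 := by
  simp [cycleSeries, ← coeff_zero_eq_constantCoeff_apply]

theorem coeff_derivative_cycleSeries (j : ℕ) :
    coeff j (d⁄dX ℚ (cycleSeries S)) = if j + 1 ∈ S then 1 else 0 := by
  rw [coeff_derivative, cycleSeries, coeff_mk]
  split_ifs
  · push_cast
    field_simp
  · rw [zero_mul]

theorem derivative_egf_genA :
    d⁄dX ℚ (mk fun n => (genA S n : ℚ) / n.factorial) =
      (mk fun n => (genA S n : ℚ) / n.factorial) * d⁄dX ℚ (cycleSeries S) := by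
  ext m
  rw [mul_comm, coeff_mul, Nat.sum_antidiagonal_eq_sum_range_succ (fun j i =>
      coeff j (d⁄dX ℚ (cycleSeries S)) * coeff i (mk fun n => (genA S n : ℚ) / n.factorial)),
    coeff_derivative, coeff_mk, genA_succ, Nat.factorial_succ]
  push_cast
  rw [div_mul_eq_mul_div, mul_comm, mul_div_mul_left _ _ (by positivity), sum_div]
  refine sum_congr rfl fun k hk => ?_
  rw [coeff_derivative_cycleSeries, coeff_mk]
  split_ifs
  · have hkm := Nat.le_of_lt_succ (mem_range.1 hk)
    have hd : (m.descFactorial k : ℚ) ≠ 0 := by exact_mod_cast (Nat.descFactorial_pos.2 hkm).ne'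
    rw [← Nat.factorial_mul_descFactorial hkm]
    push_cast
    field_simp
  · rw [zero_div, zero_mul]

end CycleSeries

theorem statement2_general (S : Set ℕ) [DecidablePred (· ∈ S)] :
    PowerSeries.mk (fun n => (genA S n : ℚ) / n.factorial) =
      psSubst (PowerSeries.mk fun s => if s ∈ S then (s : ℚ)⁻¹ else 0)
        (PowerSeries.exp ℚ) := by
  have hF := constantCoeff_cycleSeries S
  show _ = psSubst (cycleSeries S) (exp ℚ)
  have hE : constantCoeff (psSubst (cycleSeries S) (exp ℚ)) = 1 := by
    rw [constantCoeff_psSubst, constantCoeff_exp]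
  rw [psSubst_eq_subst hF] at hE ⊢
  refine eq_of_derivative_eq_mul (derivative_egf_genA S) (derivative_exp_subst hF) ?_
    (hE ▸ one_ne_zero)
  rw [hE, ← coeff_zero_eq_constantCoeff_apply, coeff_mk, genA_zero]
  simp

theorem statement2 (S : Set ℕ) [DecidablePred (· ∈ S)] (hS : 0 ∉ S) :
    PowerSeries.mk (fun n => (genA S n : ℚ) / n.factorial) =
      psSubst (PowerSeries.mk fun s => if s ∈ S then (s : ℚ)⁻¹ else 0)
        (PowerSeries.exp ℚ) :=
  statement2_general S
end

section
/- For all n ∈ ℕ and every set S of positive integers, A_{n,S} ≥ B_{n,S}: the number of permutations of {1,…,n} all of whose cycle lengths lie in S is at least the number of set partitions of {1,…,n} all of whose block sizes lie in S. -/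
/-- Generalized Bell number `B_{n,S}`: the number of set partitions of `{1,…,n}`
all of whose block sizes lie in `S`. -/
noncomputable def genB (S : Set ℕ) (n : ℕ) : ℕ :=
  Nat.card {P : Finpartition (Finset.univ : Finset (Fin n)) // ∀ p ∈ P.parts, p.card ∈ S}

/-!
Rotating every block of a set partition cyclically yields a permutation whose cycles are exactly
the blocks. The partition is recovered from the permutation as its cycle partition, so this is an
injection from partitions with block sizes in `S` into permutations with cycle lengths in `S`.
-/

open Finset Function Equiv

namespace Equiv.Perm

variable {α β : Type*}

theorem sameCycle_permCongr (e : α ≃ β) (f : Perm α) {x y : β} :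
    (e.permCongr f).SameCycle x y ↔ f.SameCycle (e.symm x) (e.symm y) := by
  have hpow (k : ℤ) : (e.permCongr f) ^ k = e.permCongr (f ^ k) :=
    (map_zpow e.permCongrHom f k).symm
  simp only [SameCycle, hpow, permCongr_apply, ← eq_symm_apply]

theorem sameCycle_sigmaCongrRight_iff {ι : Type*} {κ : ι → Type*} {F : ∀ i, Perm (κ i)}
    (hF : ∀ i a b, (F i).SameCycle a b) {x y : Σ i, κ i} :
    (sigmaCongrRight F).SameCycle x y ↔ x.1 = y.1 := by
  have hpow (k : ℤ) : sigmaCongrRight F ^ k = sigmaCongrRight (F ^ k) :=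
    (map_zpow (sigmaCongrRightHom κ) F k).symm
  obtain ⟨i, a⟩ := x
  obtain ⟨j, b⟩ := y
  constructor
  · rintro ⟨k, hk⟩
    rw [hpow, sigmaCongrRight_apply] at hk
    exact (Sigma.mk.inj_iff.1 hk).1
  · rintro (rfl : i = j)
    obtain ⟨k, hk⟩ := hF i a b
    exact ⟨k, by rw [hpow, sigmaCongrRight_apply, Pi.pow_apply, hk]⟩

theorem sameCycle_finRotate {n : ℕ} (a b : Fin n) : (finRotate n).SameCycle a b := by
  have := NeZero.of_pos a.pos
  refine ⟨(b - a : Fin n).val, ?_⟩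
  rw [zpow_natCast, ← iterate_eq_pow, ← finCycle_eq_finRotate_iterate, finCycle_apply,
    add_sub_cancel]

theorem minimalPeriod_eq_card_sameCycle [Fintype α] [DecidableEq α] (f : Perm α) (x : α) :
    minimalPeriod f x = #{y | f.SameCycle x y} := by
  classical
  have horbit : MulAction.orbit (Subgroup.zpowers f) x = {y | f.SameCycle x y} := by
    ext y
    simp only [MulAction.mem_orbit_iff, Subgroup.exists_zpowers]
    rfl
  change minimalPeriod (f • ·) x = _
  rw [MulAction.minimalPeriod_eq_card, ← Fintype.card_subtype]
  exact Fintype.card_congr (Equiv.setCongr horbit)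

end Equiv.Perm

namespace Finpartition

variable {α : Type*} [DecidableEq α]

theorem ext_of_part_eq {s : Finset α} {P Q : Finpartition s} (h : ∀ a, P.part a = Q.part a) :
    P = Q := by
  have parts_subset {P' Q' : Finpartition s} (h' : ∀ a, P'.part a = Q'.part a) :
      P'.parts ⊆ Q'.parts := by
    intro t ht
    obtain ⟨a, ha⟩ := P'.nonempty_of_mem_parts ht
    have hP'a : P'.part a = t := P'.part_eq_of_mem ht ha
    rw [← hP'a, h']
    exact Q'.part_mem.2 (P'.part_mem.1 (hP'a ▸ ht))
  exact Finpartition.ext (subset_antisymm (parts_subset h) (parts_subset fun a => (h a).symm))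

variable [Fintype α] (P : Finpartition (univ : Finset α))

noncomputable def blockEnum : α ≃ Σ t : P.parts, Fin #t.1 :=
  (Equiv.subtypeUnivEquiv mem_univ).symm.trans
    (P.equivSigmaParts.trans (sigmaCongrRight fun t => t.1.equivFin))

theorem blockEnum_fst (x : α) : (P.blockEnum x).1 = ⟨P.part x, P.part_mem.2 (mem_univ x)⟩ :=
  rfl

noncomputable def blockRotation : Perm α :=
  P.blockEnum.symm.permCongr (sigmaCongrRight fun t => finRotate #t.1)

theorem sameCycle_blockRotation_iff {x y : α} :
    P.blockRotation.SameCycle x y ↔ P.part x = P.part y := by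
  rw [blockRotation, Perm.sameCycle_permCongr, symm_symm,
    Perm.sameCycle_sigmaCongrRight_iff fun _ => Perm.sameCycle_finRotate, blockEnum_fst,
    blockEnum_fst, Subtype.mk.injEq]

theorem minimalPeriod_blockRotation (x : α) : minimalPeriod P.blockRotation x = #(P.part x) := by
  rw [Perm.minimalPeriod_eq_card_sameCycle]
  congr 1
  ext y
  simp [sameCycle_blockRotation_iff, P.mem_part_iff_part_eq_part (mem_univ y) (mem_univ x),
    eq_comm]

theorem blockRotation_injective : Injective (blockRotation (α := α)) := by
  intro P Q h
  refine ext_of_part_eq fun a => ?_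
  ext b
  simp only [P.mem_part_iff_part_eq_part (mem_univ b) (mem_univ a),
    Q.mem_part_iff_part_eq_part (mem_univ b) (mem_univ a), ← sameCycle_blockRotation_iff, h]

end Finpartition

theorem card_finpartition_le_card_perm {α : Type*} [Fintype α] [DecidableEq α] (S : Set ℕ) :
    Nat.card {P : Finpartition (univ : Finset α) // ∀ p ∈ P.parts, #p ∈ S} ≤
      Nat.card {σ : Perm α // ∀ x, minimalPeriod σ x ∈ S} := by
  refine Nat.card_le_card_of_injective
    (fun P => ⟨P.1.blockRotation, fun x => ?_⟩) fun P Q h => ?_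
  · rw [P.1.minimalPeriod_blockRotation]
    exact P.2 _ (P.1.part_mem.2 (mem_univ x))
  · exact Subtype.ext (Finpartition.blockRotation_injective (congrArg Subtype.val h))

theorem statement9_general (S : Set ℕ) (n : ℕ) :
    genB S n ≤ genA S n :=
  card_finpartition_le_card_perm S

theorem statement9 (S : Set ℕ) (hS : 0 ∉ S) (n : ℕ) :
    genB S n ≤ genA S n :=
  statement9_general S n
end

section
/- For all n ∈ ℕ and every set S of positive integers, A_{n+1,S} = ∑_{s ∈ S, 1 ≤ s ≤ n+1} (n!/(n−s+1)!) · A_{n+1−s,S}, where n!/(n−s+1)! is the falling factorial n·(n−1)⋯(n−s+2) (in Lean: the sum over s in Finset.range (n+2) with s ∈ S of Nat.descFactorial n (s−1) · A_{n+1−s,S}). -/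
/-!
Sort the permutations `σ` of `Fin (n + 1)` by the length `t + 1` of the cycle through `0`.
Listing that cycle as `0, σ 0, …, σ^[t] 0` gives an injection `g : Fin (t + 1) ↪ Fin (n + 1)`
with `g 0 = 0` along which `σ` acts as `finRotate`; there are `n (n - 1) ⋯ (n - t + 1)` such `g`.
For fixed `g`, the permutations rotating along `g` are exactly the extensions of an arbitrary
permutation `τ` of the `n - t` remaining points. Their periods are `t + 1` on the cycle and those
of `τ` elsewhere, so the cycle-length condition on `σ` splits into `t + 1 ∈ S` and the same
condition on `τ`, which is counted by `A_{n-t,S}`.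
-/

open Equiv Function

theorem Function.minimalPeriod_apply_of_semiconj {α β : Type*} {fa : α → α} {fb : β → β}
    {e : α → β} (he : Injective e) (h : Semiconj e fa fb) (x : α) :
    minimalPeriod fb (e x) = minimalPeriod fa x :=
  minimalPeriod_eq_minimalPeriod_iff.2 fun k => by
    simp only [IsPeriodicPt, IsFixedPt, ← h.iterate_right k x, he.eq_iff]

open Fin.NatCast

theorem finRotate_iterate_apply {t : ℕ} (k : ℕ) (i : Fin (t + 1)) :
    (finRotate (t + 1))^[k] i = i + k := by
  induction k with
  | zero => simp
  | succ k ih => rw [iterate_succ_apply', ih, finRotate_apply]; push_cast; exact add_assoc _ _ _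

theorem minimalPeriod_finRotate {t : ℕ} (i : Fin (t + 1)) :
    minimalPeriod (finRotate (t + 1)) i = t + 1 := by
  refine Nat.dvd_right_iff_eq.1 fun k => ?_
  rw [← isPeriodicPt_iff_minimalPeriod_dvd, IsPeriodicPt, IsFixedPt, finRotate_iterate_apply,
    add_eq_left, Fin.natCast_eq_zero]

theorem genA_card_eq_natCard (S : Set ℕ) (α : Type*) [Fintype α] :
    genA S (Fintype.card α) = Nat.card {σ : Perm α // ∀ x, minimalPeriod σ x ∈ S} := by
  let e := Fintype.equivFin α
  refine Nat.card_congr (e.permCongr.subtypeEquiv fun σ => ?_).symm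
  have hsc : Semiconj e σ (e.permCongr σ) := fun a => by simp
  exact e.forall_congr fun {x} => by rw [minimalPeriod_apply_of_semiconj e.injective hsc]

section Cycle

variable {α : Type*} {t : ℕ} {g : Fin (t + 1) ↪ α}

theorem minimalPeriod_of_semiconj_finRotate {f : α → α} (hf : Semiconj g (finRotate (t + 1)) f)
    (i : Fin (t + 1)) : minimalPeriod f (g i) = t + 1 := by
  rw [minimalPeriod_apply_of_semiconj g.injective hf, minimalPeriod_finRotate]

theorem apply_mem_range_iff_of_semiconj {σ : Perm α} (hσ : Semiconj g (finRotate (t + 1)) σ)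
    (x : α) : σ x ∈ Set.range g ↔ x ∈ Set.range g := by
  constructor
  · rintro ⟨j, hj⟩
    refine ⟨(finRotate (t + 1)).symm j, σ.injective ?_⟩
    rw [← hσ, apply_symm_apply, hj]
  · rintro ⟨i, rfl⟩
    exact ⟨_, hσ i⟩

variable [DecidableEq α] (g)

noncomputable def rangeRotation : Perm (Set.range g) :=
  (Equiv.ofInjective g g.injective).permCongr (finRotate (t + 1))

noncomputable def withCycle (τ : Perm {x // x ∉ Set.range g}) : Perm α :=
  (rangeRotation g).subtypeCongr τ

theorem semiconj_withCycle (τ : Perm {x // x ∉ Set.range g}) :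
    Semiconj g (finRotate (t + 1)) (withCycle g τ) := fun i => by
  rw [withCycle, Perm.subtypeCongr.left_apply _ _ (Set.mem_range_self i)]
  simp [rangeRotation, Equiv.permCongr_apply, Equiv.ofInjective_symm_apply]

theorem withCycle_apply_of_notMem (τ : Perm {x // x ∉ Set.range g})
    (y : {x // x ∉ Set.range g}) : withCycle g τ y = τ y :=
  Perm.subtypeCongr.right_apply_subtype _ _ y

noncomputable def withCycleEquiv :
    Perm {x // x ∉ Set.range g} ≃ {σ : Perm α // Semiconj g (finRotate (t + 1)) σ} where
  toFun τ := ⟨withCycle g τ, semiconj_withCycle g τ⟩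
  invFun σ := σ.1.subtypePerm fun x => not_congr (apply_mem_range_iff_of_semiconj σ.2 x)
  left_inv τ := by ext y; simp [withCycle_apply_of_notMem]
  right_inv σ := by
    ext x
    by_cases hx : x ∈ Set.range g
    · obtain ⟨i, rfl⟩ := hx
      exact (semiconj_withCycle g _ i).symm.trans (σ.2 i)
    · exact withCycle_apply_of_notMem g _ ⟨x, hx⟩

theorem periods_withCycle_mem_iff {S : Set ℕ} (hS : t + 1 ∈ S)
    (τ : Perm {x // x ∉ Set.range g}) :
    (∀ x, minimalPeriod (withCycle g τ) x ∈ S) ↔ ∀ y, minimalPeriod τ y ∈ S := by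
  have hτ (y : {x // x ∉ Set.range g}) : minimalPeriod (withCycle g τ) y = minimalPeriod τ y :=
    minimalPeriod_apply_of_semiconj Subtype.val_injective (fun y =>
      (withCycle_apply_of_notMem g τ y).symm) y
  refine ⟨fun h y => hτ y ▸ h y, fun h x => ?_⟩
  by_cases hx : x ∈ Set.range g
  · obtain ⟨i, rfl⟩ := hx
    rwa [minimalPeriod_of_semiconj_finRotate (semiconj_withCycle g τ)]
  · exact hτ ⟨x, hx⟩ ▸ h _

theorem natCard_semiconj_periods_mem [Fintype α] {S : Set ℕ} (hS : t + 1 ∈ S) :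
    Nat.card {σ : Perm α //
        Semiconj g (finRotate (t + 1)) σ ∧ ∀ x, minimalPeriod σ x ∈ S} =
      genA S (Fintype.card α - (t + 1)) := by
  have hcard : Fintype.card {x // x ∉ Set.range g} = Fintype.card α - (t + 1) := by
    rw [Fintype.card_subtype_compl, Set.card_range_of_injective g.injective, Fintype.card_fin]
  rw [← hcard, genA_card_eq_natCard]
  exact Nat.card_congr ((subtypeSubtypeEquivSubtypeInter _ _).symm.trans
    ((withCycleEquiv g).subtypeEquiv fun τ => (periods_withCycle_mem_iff g hS τ).symm).symm)

end Cycle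

section Orbit

variable {α : Type*} {t : ℕ}

def orbitEmbedding (f : α → α) (a : α) (h : minimalPeriod f a = t + 1) : Fin (t + 1) ↪ α :=
  ⟨fun i => f^[i] a, fun i j hij =>
    Fin.ext <| iterate_injOn_Iio_minimalPeriod (by simpa [h] using i.isLt)
      (by simpa [h] using j.isLt) hij⟩

theorem semiconj_orbitEmbedding (f : α → α) (a : α) (h : minimalPeriod f a = t + 1) :
    Semiconj (orbitEmbedding f a h) (finRotate (t + 1)) f := fun i => by
  change f^[(finRotate (t + 1) i : ℕ)] a = f (f^[i] a)
  rw [finRotate_apply, Fin.val_add, Fin.val_one', Nat.add_mod_mod, ← iterate_succ_apply' f i a]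
  simpa only [h] using iterate_mod_minimalPeriod_eq (f := f) (x := a) (n := i + 1)

theorem apply_eq_iterate_of_semiconj_finRotate {g : Fin (t + 1) → α} {f : α → α}
    (hg : Semiconj g (finRotate (t + 1)) f) (i : Fin (t + 1)) : g i = f^[i] (g 0) := by
  rw [← hg.iterate_right, finRotate_iterate_apply, zero_add, Fin.cast_val_eq_self]

def cycleThroughEquiv (P : Perm α → Prop) (a : α) :
    {σ : Perm α // P σ ∧ minimalPeriod σ a = t + 1} ≃
      Σ g : {g : Fin (t + 1) ↪ α // g 0 = a},
        {σ : Perm α // Semiconj g.1 (finRotate (t + 1)) σ ∧ P σ} where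
  toFun σ := ⟨⟨orbitEmbedding σ.1 a σ.2.2, rfl⟩, σ.1,
    semiconj_orbitEmbedding σ.1 a σ.2.2, σ.2.1⟩
  invFun p := ⟨p.2.1, p.2.2.2, by
    simpa only [p.1.2] using minimalPeriod_of_semiconj_finRotate p.2.2.1 0⟩
  left_inv σ := rfl
  right_inv p := by
    refine Sigma.subtype_ext (Subtype.ext (DFunLike.ext _ _ fun i => ?_)) rfl
    rw [apply_eq_iterate_of_semiconj_finRotate p.2.2.1 i, p.1.2]
    rfl

end Orbit

section Counting

variable {α : Type*} [Fintype α] [DecidableEq α]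

def embeddingConsEquiv {t : ℕ} (a : α) :
    (Fin t ↪ {x // x ≠ a}) ≃ {g : Fin (t + 1) ↪ α // g 0 = a} where
  toFun h := ⟨⟨Fin.cons a (Subtype.val ∘ h), Fin.cons_injective_iff.2
    ⟨fun ⟨i, hi⟩ => (h i).2 hi, Subtype.val_injective.comp h.injective⟩⟩, rfl⟩
  invFun g := ⟨fun i => ⟨g.1 i.succ, fun h =>
    Fin.succ_ne_zero i (g.1.injective (h.trans g.2.symm))⟩,
    fun i j hij => Fin.succ_injective _ (g.1.injective (congrArg Subtype.val hij))⟩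
  left_inv h := by ext; simp
  right_inv g := by
    ext i
    cases i using Fin.cases with
    | zero => exact g.2.symm
    | succ i => rfl

theorem natCard_embedding_apply_zero_eq (t : ℕ) (a : α) :
    Nat.card {g : Fin (t + 1) ↪ α // g 0 = a} = (Fintype.card α - 1).descFactorial t := by
  rw [← Nat.card_congr (embeddingConsEquiv a), Nat.card_eq_fintype_card,
    Fintype.card_embedding_eq, Fintype.card_fin, Fintype.card_subtype_compl,
    Fintype.card_subtype_eq]

theorem natCard_periods_mem_minimalPeriod_eq {S : Set ℕ} {t : ℕ} (hS : t + 1 ∈ S) (a : α) :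
    Nat.card {σ : Perm α // (∀ x, minimalPeriod σ x ∈ S) ∧ minimalPeriod σ a = t + 1} =
      (Fintype.card α - 1).descFactorial t * genA S (Fintype.card α - (t + 1)) := by
  rw [Nat.card_congr (cycleThroughEquiv _ a), Nat.card_sigma]
  simp only [natCard_semiconj_periods_mem _ hS, Finset.sum_const, Finset.card_univ,
    smul_eq_mul, ← Nat.card_eq_fintype_card, natCard_embedding_apply_zero_eq]

theorem natCard_periods_mem_eq_sum (S : Set ℕ) [DecidablePred (· ∈ S)] (a : α) :
    Nat.card {σ : Perm α // ∀ x, minimalPeriod σ x ∈ S} =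
      ∑ s ∈ (Finset.range (Fintype.card α + 1)).filter (· ∈ S),
        Nat.card {σ : Perm α //
          (∀ x, minimalPeriod σ x ∈ S) ∧ minimalPeriod σ a = s} := by
  classical
  simp only [Nat.card_eq_fintype_card, Fintype.card_subtype]
  rw [Finset.card_eq_sum_card_fiberwise (f := fun σ : Perm α => minimalPeriod σ a)
    (t := (Finset.range (Fintype.card α + 1)).filter (· ∈ S)) fun σ hσ => ?_]
  · simp only [Finset.filter_filter]
  · simp only [Finset.coe_filter, Finset.mem_univ, true_and, Set.mem_ofPred_eq] at hσ
    simpa [Nat.lt_succ_iff, minimalPeriod_le_card] using hσ a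

end Counting

theorem statement10 (S : Set ℕ) [DecidablePred (· ∈ S)] (hS : 0 ∉ S) (n : ℕ) :
    genA S (n + 1) =
      ∑ s ∈ (Finset.range (n + 2)).filter (· ∈ S),
        Nat.descFactorial n (s - 1) * genA S (n + 1 - s) := by
  rw [genA, natCard_periods_mem_eq_sum S (0 : Fin (n + 1)), Fintype.card_fin]
  refine Finset.sum_congr rfl fun s hs => ?_
  obtain ⟨-, hsS⟩ := Finset.mem_filter.1 hs
  obtain ⟨t, rfl⟩ := Nat.exists_eq_succ_of_ne_zero (ne_of_mem_of_not_mem hsS hS)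
  simpa using natCard_periods_mem_minimalPeriod_eq hsS (0 : Fin (n + 1))
end

section
/- For all n, k ∈ ℕ and every set S of positive integers, [n+1, k+1]_S = ∑_{s ∈ S, 1 ≤ s ≤ n+1} (n!/(n−s+1)!) · [n+1−s, k]_S, where n!/(n−s+1)! is the falling factorial n·(n−1)⋯(n−s+2) (in Lean: the sum over s in Finset.range (n+2) with s ∈ S of Nat.descFactorial n (s−1) · [n+1−s, k]_S). -/
/-- Number of cycles of a permutation of `Fin n`, counting fixed points as cycles of length 1. -/
noncomputable def cycleCount {n : ℕ} (σ : Equiv.Perm (Fin n)) : ℕ :=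
  σ.cycleType.card + (Finset.univ.filter fun x => σ x = x).card

/-- Generalized unsigned Stirling number of the first kind `[n,k]_S`: the number of
permutations of `{1,…,n}` with exactly `k` cycles (fixed points counting as cycles of
length 1), all of whose cycle lengths lie in `S`. -/
noncomputable def stirling1 (S : Set ℕ) (n k : ℕ) : ℕ :=
  Nat.card {σ : Equiv.Perm (Fin n) //
    cycleCount σ = k ∧ ∀ x, Function.minimalPeriod σ x ∈ S}

/-!
Sort the permutations by the length of the cycle through a marked point. Deleting the marked
point from a cycle of length `s + 1 ≥ 2` and marking its image instead is a bijection onto the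
permutations of the remaining points with a marked cycle of length `s`, any of these points being
the new mark (`Equiv.Perm.decomposeOption`); it changes neither the number of cycles nor the other
cycle lengths. After `s - 1` such steps, `n (n - 1) ⋯ (n - s + 2)` choices in all, the marked
point is fixed, and deleting it leaves an `S`-permutation of `n + 1 - s` points with `k` cycles.

Cycles are tracked through their orbits as finsets: the minimal period of a point is the size of
its orbit, and the number of cycles is the number of distinct orbits.
-/

open Equiv Finset Function

namespace Equiv.Perm

variable {α β : Type*} [DecidableEq α] [DecidableEq β]

section insertNoneBefore

variable (p : α) (e : Perm α) {y : α}

def insertNoneBefore : Perm (Option α) := swap none (some p) * e.optionCongr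

@[simp] lemma insertNoneBefore_none : insertNoneBefore p e none = some p := by
  simp [insertNoneBefore]

lemma insertNoneBefore_some_of_ne (h : e y ≠ p) :
    insertNoneBefore p e (some y) = some (e y) := by
  simp [insertNoneBefore, swap_apply_of_ne_of_ne, h]

end insertNoneBefore

variable [Fintype α] [Fintype β]

def cycleOrbit (σ : Perm α) (x : α) : Finset α := {y | σ.SameCycle x y}

def numCycles (σ : Perm α) : ℕ := #(univ.image σ.cycleOrbit)

variable {σ : Perm α} {x y : α}

@[simp] lemma mem_cycleOrbit : y ∈ σ.cycleOrbit x ↔ σ.SameCycle x y := by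
  simp [cycleOrbit]

lemma SameCycle.cycleOrbit_eq (h : σ.SameCycle x y) : σ.cycleOrbit x = σ.cycleOrbit y := by
  ext z
  simp only [mem_cycleOrbit]
  exact ⟨h.symm.trans, h.trans⟩

lemma cycleOrbit_of_apply_eq (hx : σ x = x) : σ.cycleOrbit x = {x} := by
  ext y
  simp only [mem_cycleOrbit, mem_singleton]
  exact ⟨fun h => (h.eq_of_left hx).symm, fun h => h ▸ SameCycle.refl σ x⟩

lemma cycleOrbit_eq_support_cycleOf (hx : x ∈ σ.support) :
    σ.cycleOrbit x = (σ.cycleOf x).support := by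
  ext y
  rw [mem_cycleOrbit, mem_support_cycleOf_iff, and_iff_left hx]

lemma image_support_cycleOrbit :
    σ.support.image σ.cycleOrbit = σ.cycleFactorsFinset.image support := by
  ext A
  simp only [mem_image]
  constructor
  · rintro ⟨x, hx, rfl⟩
    exact ⟨σ.cycleOf x, cycleOf_mem_cycleFactorsFinset_iff.2 hx,
      (cycleOrbit_eq_support_cycleOf hx).symm⟩
  · rintro ⟨c, hc, rfl⟩
    obtain ⟨a, ha⟩ := (mem_cycleFactorsFinset_iff.1 hc).1.nonempty_support
    have haσ := mem_cycleFactorsFinset_support_le hc ha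
    exact ⟨a, haσ, by rw [cycleOrbit_eq_support_cycleOf haσ, ← cycle_is_cycleOf ha hc]⟩

lemma card_image_support_cycleFactorsFinset :
    #(σ.cycleFactorsFinset.image support) = #σ.cycleFactorsFinset := by
  refine card_image_of_injOn fun c hc d hd hcd => ?_
  obtain ⟨a, ha⟩ := (mem_cycleFactorsFinset_iff.1 hc).1.nonempty_support
  rw [cycle_is_cycleOf ha hc, cycle_is_cycleOf (show a ∈ d.support from hcd ▸ ha) hd]

lemma card_cycleType_add_card_fixedPoints (σ : Perm α) :
    σ.cycleType.card + #{x | σ x = x} = σ.numCycles := by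
  have hfixed : σ.supportᶜ = ({x | σ x = x} : Finset α) := by
    ext x
    simp
  have hsplit : univ.image σ.cycleOrbit =
      σ.support.image σ.cycleOrbit ∪ σ.supportᶜ.image σ.cycleOrbit := by
    rw [← image_union, union_compl]
  have hdisj :
      _root_.Disjoint (σ.support.image σ.cycleOrbit) (σ.supportᶜ.image σ.cycleOrbit) := by
    simp only [disjoint_left, mem_image, not_exists, not_and]
    rintro _ ⟨x, hx, rfl⟩ z hz hzx
    rw [hfixed, mem_filter] at hz
    have hxz : x ∈ σ.cycleOrbit z := hzx ▸ mem_cycleOrbit.2 (SameCycle.refl σ x)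
    rw [cycleOrbit_of_apply_eq hz.2, mem_singleton] at hxz
    exact mem_support.1 hx (hxz ▸ hz.2)
  have hcard_fixed : #(σ.supportᶜ.image σ.cycleOrbit) = #{x | σ x = x} := by
    rw [hfixed, image_congr fun x hx => cycleOrbit_of_apply_eq (mem_filter.1 hx).2,
      card_image_of_injective _ singleton_injective]
  rw [numCycles, hsplit, card_union_of_disjoint hdisj, hcard_fixed, image_support_cycleOrbit,
    card_image_support_cycleFactorsFinset, cycleType_def, Multiset.card_map]
  rfl

lemma minimalPeriod_eq_card_cycleOrbit (σ : Perm α) (x : α) :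
    minimalPeriod σ x = #(σ.cycleOrbit x) := by
  have horbit : MulAction.orbit (Subgroup.zpowers σ) x = ↑(σ.cycleOrbit x) := by
    ext y
    simp only [MulAction.mem_orbit_iff, Subgroup.exists_zpowers, coe_filter, mem_univ, true_and,
      cycleOrbit]
    rfl
  classical
  rw [show ⇑σ = (σ • ·) from rfl, MulAction.minimalPeriod_eq_card,
    ← Nat.card_eq_fintype_card, horbit, Nat.card_coe_set_eq, Set.ncard_coe_finset]

lemma SameCycle.minimalPeriod_eq (h : σ.SameCycle x y) :
    minimalPeriod σ x = minimalPeriod σ y := by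
  rw [minimalPeriod_eq_card_cycleOrbit, minimalPeriod_eq_card_cycleOrbit, h.cycleOrbit_eq]

lemma cycleOrbit_apply_eq_map {τ : Perm β} (f : α ↪ β)
    (h : ∀ w, σ.SameCycle x w → τ (f w) = f (σ w)) :
    τ.cycleOrbit (f x) = (σ.cycleOrbit x).map f := by
  have hpow : ∀ n : ℕ, (τ ^ n) (f x) = f ((σ ^ n) x) := by
    intro n
    induction n with
    | zero => rfl
    | succ n ih =>
      rw [pow_succ', mul_apply, ih, h _ (sameCycle_pow_right.2 (SameCycle.refl σ x)),
        ← mul_apply, ← pow_succ']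
  ext z
  simp only [mem_cycleOrbit, mem_map]
  constructor
  · intro hz
    obtain ⟨n, rfl⟩ := hz.exists_nat_pow_eq
    exact ⟨(σ ^ n) x, sameCycle_pow_right.2 (SameCycle.refl σ x), (hpow n).symm⟩
  · rintro ⟨w, hw, rfl⟩
    obtain ⟨n, rfl⟩ := hw.exists_nat_pow_eq
    rw [← hpow]
    exact sameCycle_pow_right.2 (SameCycle.refl τ _)

lemma numCycles_eq_of_cycleOrbit_apply {τ : Perm β} {g : Finset α → Finset β}
    (hg : Injective g) {f : α → β} (hf : ∀ x, τ.cycleOrbit (f x) = g (σ.cycleOrbit x))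
    (hcover : ∀ y, ∃ x, τ.SameCycle y (f x)) : τ.numCycles = σ.numCycles := by
  have himage : univ.image τ.cycleOrbit = (univ.image σ.cycleOrbit).image g := by
    ext A
    simp only [mem_image, mem_univ, true_and, exists_exists_eq_and]
    constructor
    · rintro ⟨y, rfl⟩
      obtain ⟨x, hx⟩ := hcover y
      exact ⟨x, (hx.cycleOrbit_eq.trans (hf x)).symm⟩
    · rintro ⟨x, rfl⟩
      exact ⟨f x, hf x⟩
  rw [numCycles, himage, card_image_of_injective _ hg, numCycles]

section permCongr

variable (φ : α ≃ β) (σ : Perm α) (x y : α)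

lemma cycleOrbit_permCongr :
    (φ.permCongr σ).cycleOrbit (φ x) = (σ.cycleOrbit x).map φ.toEmbedding :=
  cycleOrbit_apply_eq_map φ.toEmbedding fun w _ => by simp

lemma minimalPeriod_permCongr : minimalPeriod (φ.permCongr σ) (φ x) = minimalPeriod σ x := by
  rw [minimalPeriod_eq_card_cycleOrbit, cycleOrbit_permCongr, card_map,
    minimalPeriod_eq_card_cycleOrbit]

lemma sameCycle_permCongr_s12 : (φ.permCongr σ).SameCycle (φ x) (φ y) ↔ σ.SameCycle x y := by
  rw [← mem_cycleOrbit, cycleOrbit_permCongr, mem_map_equiv, symm_apply_apply, mem_cycleOrbit]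

lemma numCycles_permCongr : (φ.permCongr σ).numCycles = σ.numCycles :=
  numCycles_eq_of_cycleOrbit_apply (map_injective φ.toEmbedding) (cycleOrbit_permCongr φ σ)
    fun y => ⟨φ.symm y, by rw [apply_symm_apply]⟩

end permCongr

section optionCongr

variable (e : Perm α) (y : α)

lemma cycleOrbit_optionCongr_some :
    cycleOrbit e.optionCongr (some y) = (e.cycleOrbit y).map Embedding.some :=
  cycleOrbit_apply_eq_map Embedding.some fun w _ => by simp

lemma minimalPeriod_optionCongr_some :
    minimalPeriod e.optionCongr (some y) = minimalPeriod e y := by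
  rw [minimalPeriod_eq_card_cycleOrbit, cycleOrbit_optionCongr_some, card_map,
    minimalPeriod_eq_card_cycleOrbit]

lemma numCycles_optionCongr : numCycles e.optionCongr = e.numCycles + 1 := by
  have huniv : (univ : Finset (Option α)) = insert none (univ.map Embedding.some) := by
    ext x
    cases x <;> simp
  have hnone : cycleOrbit e.optionCongr none = {none} := cycleOrbit_of_apply_eq (by simp)
  have hsome : (univ.map Embedding.some).image (cycleOrbit e.optionCongr) =
      (univ.image e.cycleOrbit).image (map Embedding.some) := by
    rw [map_eq_image, image_image, image_image]
    exact image_congr fun y _ => cycleOrbit_optionCongr_some e y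
  have hnotMem : {none} ∉ (univ.image e.cycleOrbit).image (map Embedding.some) := by
    simp only [mem_image, mem_univ, true_and, exists_exists_eq_and, not_exists]
    intro y hy
    have hy' : some y ∈ ({none} : Finset (Option α)) :=
      hy ▸ mem_map_of_mem _ (mem_cycleOrbit.2 (SameCycle.refl e y))
    simp at hy'
  rw [numCycles, huniv, image_insert, hnone, hsome, card_insert_of_notMem hnotMem,
    card_image_of_injective _ (map_injective _), numCycles]

end optionCongr

section insertNoneBefore

variable {p : α} {e : Perm α}

lemma sameCycle_insertNoneBefore_none_some (h : e.SameCycle p y) :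
    (insertNoneBefore p e).SameCycle none (some y) := by
  have hp : (insertNoneBefore p e).SameCycle none (some p) := by
    rw [← insertNoneBefore_none p e]
    exact sameCycle_apply_right.2 (SameCycle.refl _ _)
  obtain ⟨n, rfl⟩ := h.exists_nat_pow_eq
  clear h
  induction n with
  | zero => exact hp
  | succ n ih =>
    rw [pow_succ', mul_apply]
    by_cases hn : e ((e ^ n) p) = p
    · rwa [hn]
    · rw [← insertNoneBefore_some_of_ne p e hn]
      exact sameCycle_apply_right.2 ih

lemma cycleOrbit_insertNoneBefore_some_of_not_sameCycle (h : ¬ e.SameCycle p y) :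
    (insertNoneBefore p e).cycleOrbit (some y) = (e.cycleOrbit y).map Embedding.some :=
  cycleOrbit_apply_eq_map Embedding.some fun w hw => insertNoneBefore_some_of_ne p e fun hwp =>
    h (hwp ▸ (sameCycle_apply_right.2 hw : e.SameCycle y (e w))).symm

lemma sameCycle_insertNoneBefore_none_some_iff :
    (insertNoneBefore p e).SameCycle none (some y) ↔ e.SameCycle p y := by
  refine ⟨fun hτ => ?_, sameCycle_insertNoneBefore_none_some⟩
  by_contra h
  have hnone := mem_cycleOrbit.2 hτ.symm
  rw [cycleOrbit_insertNoneBefore_some_of_not_sameCycle h] at hnone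
  simp at hnone

lemma cycleOrbit_insertNoneBefore_none :
    (insertNoneBefore p e).cycleOrbit none = insertNone (e.cycleOrbit p) := by
  ext z
  cases z with
  | none => simp [SameCycle.refl]
  | some y => simp [sameCycle_insertNoneBefore_none_some_iff]

lemma minimalPeriod_insertNoneBefore_none :
    minimalPeriod (insertNoneBefore p e) none = minimalPeriod e p + 1 := by
  rw [minimalPeriod_eq_card_cycleOrbit, cycleOrbit_insertNoneBefore_none, card_insertNone,
    minimalPeriod_eq_card_cycleOrbit]

lemma minimalPeriod_insertNoneBefore_some (h : ¬ e.SameCycle p y) :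
    minimalPeriod (insertNoneBefore p e) (some y) = minimalPeriod e y := by
  rw [minimalPeriod_eq_card_cycleOrbit, cycleOrbit_insertNoneBefore_some_of_not_sameCycle h,
    card_map, minimalPeriod_eq_card_cycleOrbit]

lemma numCycles_insertNoneBefore : (insertNoneBefore p e).numCycles = e.numCycles := by
  let g : Finset α → Finset (Option α) := fun A => if p ∈ A then insertNone A else A.map .some
  have hg : LeftInverse eraseNone g := fun A => by
    by_cases hA : p ∈ A <;> simp [g, hA]
  refine numCycles_eq_of_cycleOrbit_apply hg.injective (f := some) (fun y => ?_) ?_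
  · by_cases h : e.SameCycle p y
    · rw [← (sameCycle_insertNoneBefore_none_some h).cycleOrbit_eq,
        cycleOrbit_insertNoneBefore_none, h.cycleOrbit_eq]
      simp [g, h.symm]
    · have hp : p ∉ e.cycleOrbit y := fun hp => h (mem_cycleOrbit.1 hp).symm
      rw [cycleOrbit_insertNoneBefore_some_of_not_sameCycle h]
      simp [g, hp]
  · rintro (_ | y)
    · exact ⟨p, sameCycle_insertNoneBefore_none_some (SameCycle.refl e p)⟩
    · exact ⟨y, SameCycle.refl _ _⟩

end insertNoneBefore

end Equiv.Perm

open Equiv.Perm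

lemma Nat.card_subtype_eq_sum_fiberwise {β M : Type*} [Finite β] [DecidableEq M]
    {P : β → Prop} {f : β → M} {t : Finset M} (h : ∀ b, P b → f b ∈ t) :
    Nat.card {b // P b} = ∑ c ∈ t, Nat.card {b // f b = c ∧ P b} := by
  classical
  have := Fintype.ofFinite β
  simp only [Nat.card_eq_fintype_card, Fintype.card_subtype]
  rw [card_eq_sum_card_fiberwise (f := f) (t := t) fun b hb => h b (mem_filter.1 hb).2]
  simp only [filter_filter, and_comm]

lemma card_perm_option_apply_none_eq {α : Type*} [DecidableEq α] (P : Perm (Option α) → Prop)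
    (x : Option α) :
    Nat.card {σ : Perm (Option α) // σ none = x ∧ P σ} =
      Nat.card {e : Perm α // P (decomposeOption.symm (x, e))} := by
  have hσ : ∀ σ : Perm (Option α), σ none = x →
      decomposeOption.symm (x, removeNone σ) = σ :=
    fun σ hσ => hσ ▸ decomposeOption.symm_apply_apply σ
  refine Nat.card_congr
    { toFun := fun σ => ⟨removeNone σ.1, (hσ σ.1 σ.2.1).symm ▸ σ.2.2⟩
      invFun := fun e => ⟨decomposeOption.symm (x, e.1), by simp, e.2⟩
      left_inv := fun σ => Subtype.ext (hσ σ.1 σ.2.1)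
      right_inv := fun e => Subtype.ext ?_ }
  simpa using congrArg Prod.snd (decomposeOption.apply_symm_apply (x, e.1))

lemma stirling1_card_eq (S : Set ℕ) (α : Type*) [Fintype α] [DecidableEq α] (k : ℕ) :
    stirling1 S (Fintype.card α) k =
      Nat.card {σ : Perm α // σ.numCycles = k ∧ ∀ x, minimalPeriod σ x ∈ S} := by
  let φ := (Fintype.equivFin α).symm
  refine Nat.card_congr (φ.permCongr.subtypeEquiv fun σ => ?_)
  rw [cycleCount, card_cycleType_add_card_fixedPoints, numCycles_permCongr,
    ← φ.forall_congr_right]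
  simp only [minimalPeriod_permCongr]

section markedCount

variable (S : Set ℕ) {α β : Type*} [Fintype α] [DecidableEq α] [Fintype β] [DecidableEq β]

noncomputable def markedCount (a : α) (s k : ℕ) : ℕ :=
  Nat.card {σ : Perm α // minimalPeriod σ a = s ∧
    (∀ x, ¬ σ.SameCycle a x → minimalPeriod σ x ∈ S) ∧ σ.numCycles = k}

lemma markedCount_equiv_apply (φ : α ≃ β) (a : α) (s k : ℕ) :
    markedCount S (φ a) s k = markedCount S a s k := by
  refine Nat.card_congr (φ.permCongr.subtypeEquiv fun σ => ?_).symm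
  rw [← φ.forall_congr_right]
  simp only [minimalPeriod_permCongr, numCycles_permCongr, sameCycle_permCongr_s12]

lemma markedCount_eq_markedCount_none (a : α) (s k : ℕ) :
    markedCount S a s k = markedCount S (none : Option {b // b ≠ a}) s k :=
  markedCount_equiv_apply S (optionSubtypeNe a) none s k

lemma markedCount_none_one (k : ℕ) :
    markedCount S (none : Option α) 1 (k + 1) =
      Nat.card {e : Perm α // e.numCycles = k ∧ ∀ x, minimalPeriod e x ∈ S} := by
  simp only [markedCount, minimalPeriod_eq_one_iff_isFixedPt, IsFixedPt]
  rw [card_perm_option_apply_none_eq]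
  refine Nat.card_congr (Equiv.subtypeEquivRight fun e => ?_)
  have hτ : decomposeOption.symm (none, e) = e.optionCongr := by ext x; simp
  have hnone : ∀ y, ¬ SameCycle e.optionCongr none (some y) := fun y h => by
    simpa using h.eq_of_left (rfl : IsFixedPt e.optionCongr none)
  simp only [hτ, Option.forall, numCycles_optionCongr, minimalPeriod_optionCongr_some, hnone,
    not_true, not_false_eq_true, true_implies, SameCycle.refl, false_implies, true_and,
    add_left_inj]
  exact and_comm

lemma markedCount_none_add_two (s k : ℕ) :
    markedCount S (none : Option α) (s + 2) k = ∑ p : α, markedCount S p (s + 1) k := by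
  rw [markedCount, Nat.card_subtype_eq_sum_fiberwise (f := fun σ => σ none) (t := univ)
    fun _ _ => mem_univ _, Fintype.sum_option]
  have hfixed : IsEmpty {σ : Perm (Option α) // σ none = none ∧
      minimalPeriod σ none = s + 2 ∧
      (∀ x, ¬ σ.SameCycle none x → minimalPeriod σ x ∈ S) ∧ σ.numCycles = k} :=
    ⟨fun σ => by simpa [minimalPeriod_eq_one_iff_isFixedPt.2 σ.2.1] using σ.2.2.1⟩
  rw [Nat.card_of_isEmpty, zero_add]
  refine sum_congr rfl fun p _ => ?_
  rw [card_perm_option_apply_none_eq]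
  refine Nat.card_congr (Equiv.subtypeEquivRight fun e => ?_)
  have hτ : decomposeOption.symm (some p, e) = insertNoneBefore p e := rfl
  simp only [hτ, minimalPeriod_insertNoneBefore_none, Option.forall, SameCycle.refl, not_true,
    false_implies, true_and, sameCycle_insertNoneBefore_none_some_iff, numCycles_insertNoneBefore,
    add_left_inj]
  refine and_congr_right fun _ => and_congr_left fun _ => forall_congr' fun y =>
    imp_congr_right fun h => ?_
  rw [minimalPeriod_insertNoneBefore_some h]

theorem markedCount_add_one (a : α) (s k : ℕ) :
    markedCount S a (s + 1) (k + 1) =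
      (Fintype.card α - 1).descFactorial s * stirling1 S (Fintype.card α - 1 - s) k := by
  induction s generalizing α with
  | zero =>
    rw [markedCount_eq_markedCount_none, markedCount_none_one, ← stirling1_card_eq]
    simp
  | succ s ih =>
    rw [markedCount_eq_markedCount_none, markedCount_none_add_two,
      sum_congr rfl fun p _ => ih p, sum_const, card_univ, smul_eq_mul,
      show Fintype.card α - 1 = Fintype.card {b // b ≠ a} by simp]
    rcases Fintype.card {b // b ≠ a} with _ | m
    · simp
    · rw [Nat.succ_descFactorial_succ]
      simp [mul_assoc]

lemma card_eq_sum_markedCount [DecidablePred (· ∈ S)] (a : α) (k : ℕ) :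
    Nat.card {σ : Perm α // σ.numCycles = k ∧ ∀ x, minimalPeriod σ x ∈ S} =
      ∑ s ∈ (range (Fintype.card α + 1)).filter (· ∈ S), markedCount S a s k := by
  rw [Nat.card_subtype_eq_sum_fiberwise (f := fun σ : Perm α => minimalPeriod σ a) fun σ hσ =>
    mem_filter.2 ⟨mem_range.2 (Nat.lt_succ_of_le minimalPeriod_le_card), hσ.2 a⟩]
  refine sum_congr rfl fun s hs => Nat.card_congr (Equiv.subtypeEquivRight fun σ => ?_)
  constructor
  · rintro ⟨hσa, hk, hσ⟩
    exact ⟨hσa, fun x _ => hσ x, hk⟩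
  · rintro ⟨rfl, hσ, hk⟩
    refine ⟨rfl, hk, fun x => ?_⟩
    by_cases h : σ.SameCycle a x
    · exact h.minimalPeriod_eq ▸ (mem_filter.1 hs).2
    · exact hσ x h

end markedCount

theorem statement12 (S : Set ℕ) [DecidablePred (· ∈ S)] (hS : 0 ∉ S) (n k : ℕ) :
    stirling1 S (n + 1) (k + 1) =
      ∑ s ∈ (Finset.range (n + 2)).filter (· ∈ S),
        Nat.descFactorial n (s - 1) * stirling1 S (n + 1 - s) k := by
  have h := stirling1_card_eq S (Fin (n + 1)) (k + 1)
  rw [Fintype.card_fin] at h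
  rw [h, card_eq_sum_markedCount S 0, Fintype.card_fin]
  refine sum_congr rfl fun s hs => ?_
  obtain ⟨s, rfl⟩ := Nat.exists_eq_succ_of_ne_zero (ne_of_mem_of_not_mem (mem_filter.1 hs).2 hS)
  rw [markedCount_add_one]
  simp
end

section
/- Let ι be a finite index type and let S : ι → Set ℕ be a family of pairwise disjoint sets of positive integers. Then for all n ∈ ℕ, B_{n, ⋃_i S_i} = ∑_{k} (n! / ∏_i (k_i)!) · ∏_i B_{k_i, S_i}, where the sum ranges over all functions k : ι → ℕ with ∑_i k_i = n and n!/∏_i (k_i)! is the multinomial coefficient (in Lean: the sum over Finset.piAntidiagonal Finset.univ n of Nat.multinomial times the product of the B_{k_i, S_i}). -/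
open Finset MvPolynomial

namespace Finpartition

variable {α β : Type*} [DecidableEq β]

def mapEmbedding [DecidableEq α] {s : Finset α} (f : α ↪ β) (P : Finpartition s) :
    Finpartition (s.map f) where
  parts := P.parts.map (Finset.mapEmbedding f).toEmbedding
  supIndep := by
    rw [supIndep_map, supIndep_iff_pairwiseDisjoint]
    exact P.pairwiseDisjoint_apply (fun _ _ => map_inter ..) (map_empty f)
  sup_parts := by
    rw [sup_map]
    exact P.sup_parts_apply (fun _ _ => map_union ..) (map_empty f)
  bot_notMem := by simp

lemma map_preimage_parts {s : Finset α} (f : α ↪ β) (Q : Finpartition (s.map f)) :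
    (Q.parts.preimage _ (map_injective f).injOn).map (Finset.mapEmbedding f).toEmbedding =
      Q.parts := by
  ext q
  simp only [mem_map, mem_preimage, RelEmbedding.coe_toEmbedding, mapEmbedding_apply]
  refine ⟨fun ⟨u, hu, hq⟩ => hq ▸ hu, fun hq => ?_⟩
  obtain ⟨u, -, rfl⟩ := subset_map_iff.1 (Q.le hq)
  exact ⟨u, hq, rfl⟩

variable [DecidableEq α] {s : Finset α}

noncomputable def comapEmbedding (f : α ↪ β) (Q : Finpartition (s.map f)) : Finpartition s :=
  ofExistsUnique (Q.parts.preimage _ (map_injective f).injOn)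
    (fun u hu => map_subset_map.1 (Q.le (mem_preimage.1 hu)))
    (fun a ha => by
      obtain ⟨q, ⟨hq, hfa⟩, huniq⟩ := Q.existsUnique_mem (mem_map_of_mem f ha)
      obtain ⟨u, -, rfl⟩ := subset_map_iff.1 (Q.le hq)
      refine ⟨u, ⟨mem_preimage.2 hq, (mem_map' f).1 hfa⟩, fun v ⟨hv, hav⟩ => ?_⟩
      exact map_injective f (huniq _ ⟨mem_preimage.1 hv, mem_map_of_mem f hav⟩))
    (fun h => Q.bot_notMem (by simpa using mem_preimage.1 h))

lemma mapEmbedding_bijective (f : α ↪ β) :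
    Function.Bijective (mapEmbedding f : Finpartition s → _) :=
  ⟨fun _ _ h => Finpartition.ext (map_injective _ (congrArg parts h)),
    fun Q => ⟨Q.comapEmbedding f, Finpartition.ext (map_preimage_parts f Q)⟩⟩

end Finpartition

lemma nat_card_finpartition_eq_genB {α : Type*} [DecidableEq α] (S : Set ℕ) (s : Finset α) :
    Nat.card {P : Finpartition s // ∀ p ∈ P.parts, #p ∈ S} = genB S #s := by
  let f : Fin #s ↪ α := s.equivFin.symm.toEmbedding.trans (.subtype _)
  have hf : univ.map f = s := by
    simp [f, ← map_map, map_univ_equiv, univ_eq_attach, attach_map_val]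
  have hcard : genB S #s = Nat.card {P : Finpartition (univ.map f) // ∀ p ∈ P.parts, #p ∈ S} :=
    Nat.card_congr <| (Equiv.ofBijective _ (Finpartition.mapEmbedding_bijective f)).subtypeEquiv
      fun P => by simp [Finpartition.mapEmbedding]
  rw [hcard, hf]

namespace MvPolynomial

lemma prod_X_comp_eq_monomial {α ι R : Type*} [Fintype α] [Fintype ι] [DecidableEq ι]
    [CommSemiring R] (c : α → ι) :
    ∏ a, (X (c a) : MvPolynomial ι R) =
      monomial (Finsupp.equivFunOnFinite.symm fun i => #{a | c a = i}) 1 := by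
  rw [monomial_eq, C_1, one_mul, Finsupp.prod_fintype _ _ (fun _ => pow_zero _),
    ← prod_fiberwise univ c]
  refine prod_congr rfl fun i _ => ?_
  rw [prod_congr rfl fun a ha => congrArg X (mem_filter.1 ha).2, prod_const]
  rfl

end MvPolynomial

section Colorings

variable {α ι : Type*} [Fintype α] [DecidableEq α] [Fintype ι] [DecidableEq ι]

lemma card_filter_card_fiber_eq_multinomial (k : ι → ℕ) (hk : ∑ i, k i = Fintype.card α) :
    #{c : α → ι | ∀ i, #{a | c a = i} = k i} = Nat.multinomial univ k := by
  have hcoeff := coeff_sum_X_pow_of_fintype (R := ℕ) (Finsupp.equivFunOnFinite.symm k)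
    (Fintype.card α)
  rw [← card_univ, ← prod_const, Fintype.prod_sum] at hcoeff
  simp_rw [prod_X_comp_eq_monomial, coeff_sum, coeff_monomial, Equiv.apply_eq_iff_eq,
    funext_iff, sum_boole, Nat.cast_id] at hcoeff
  rw [hcoeff, Finsupp.sum_fintype _ _ (fun _ => rfl), card_univ,
    Finsupp.coe_equivFunOnFinite_symm, if_pos hk,
    Finsupp.multinomial_eq_of_support_subset (subset_univ _)]
  rfl

lemma sum_fun_eq_sum_piAntidiag_multinomial {M : Type*} [AddCommMonoid M] (F : (ι → ℕ) → M) :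
    ∑ c : α → ι, F (fun i => #{a | c a = i}) =
      ∑ k ∈ piAntidiag univ (Fintype.card α), Nat.multinomial univ k • F k := by
  have hmaps : ∀ c ∈ (univ : Finset (α → ι)),
      (fun i => #{a | c a = i}) ∈ piAntidiag univ (Fintype.card α) := fun c _ =>
    mem_piAntidiag.2 ⟨(card_eq_sum_card_fiberwise fun a _ => mem_univ (c a)).symm,
      fun i _ => mem_univ i⟩
  rw [← sum_fiberwise_of_maps_to hmaps]
  refine sum_congr rfl fun k hk => ?_
  rw [sum_congr rfl fun c hc => congrArg F (mem_filter.1 hc).2, sum_const]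
  simp_rw [funext_iff]
  rw [card_filter_card_fiber_eq_multinomial k (mem_piAntidiag.1 hk).1]

lemma Finset.supIndep_fibers (c : α → ι) :
    (univ : Finset ι).SupIndep fun i => ({a | c a = i} : Finset α) :=
  supIndep_iff_pairwiseDisjoint.2 fun _ _ _ _ hij =>
    disjoint_filter.2 fun _ _ hi hj => hij (hi ▸ hj)

lemma Finset.sup_fibers_eq_univ (c : α → ι) :
    (univ : Finset ι).sup (fun i => ({a | c a = i} : Finset α)) = univ :=
  eq_univ_of_forall fun a => mem_sup.2 ⟨c a, mem_univ _, mem_filter.2 ⟨mem_univ a, rfl⟩⟩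

end Colorings

namespace Finpartition

variable {α ι : Type*} [Fintype α] [DecidableEq α] [Fintype ι] [DecidableEq ι]

def combineFibers (c : α → ι) (Q : ∀ i, Finpartition ({a | c a = i} : Finset α)) :
    Finpartition (univ : Finset α) :=
  (combine Q (supIndep_fibers c)).copy (sup_fibers_eq_univ c)

@[simp]
lemma parts_combineFibers (c : α → ι) (Q : ∀ i, Finpartition ({a | c a = i} : Finset α)) :
    (combineFibers c Q).parts = univ.biUnion fun i => (Q i).parts := rfl

end Finpartition

open Finpartition

abbrev ColoredFinpartition {ι : Type*} [DecidableEq ι] (S : ι → Set ℕ) (α : Type*) [Fintype α]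
    [DecidableEq α] :=
  Σ c : α → ι, ∀ i, {Q : Finpartition ({a | c a = i} : Finset α) // ∀ p ∈ Q.parts, #p ∈ S i}

namespace ColoredFinpartition

variable {α ι : Type*} [Fintype α] [DecidableEq α] [Fintype ι] [DecidableEq ι] {S : ι → Set ℕ}

def toFinpartition (x : ColoredFinpartition S α) :
    {P : Finpartition (univ : Finset α) // ∀ p ∈ P.parts, #p ∈ ⋃ i, S i} :=
  ⟨combineFibers x.1 fun i => (x.2 i).1, fun p hp => by
    rw [parts_combineFibers] at hp
    obtain ⟨i, -, hp⟩ := mem_biUnion.1 hp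
    exact Set.mem_iUnion.2 ⟨i, (x.2 i).2 p hp⟩⟩

lemma toFinpartition_injective (hS : Pairwise fun i j => Disjoint (S i) (S j)) :
    Function.Injective (toFinpartition (S := S) (α := α)) := by
  rintro ⟨c, Q⟩ ⟨c', Q'⟩ h
  have hparts : ∀ p, (∃ i, p ∈ (Q i).1.parts) ↔ ∃ i, p ∈ (Q' i).1.parts := fun p => by
    simpa [toFinpartition] using congrArg (p ∈ ·.1.parts) h
  have hcolor : ∀ {i j p}, p ∈ (Q i).1.parts → p ∈ (Q' j).1.parts → i = j := fun hp hp' =>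
    hS.eq (Set.not_disjoint_iff.2 ⟨_, (Q _).2 _ hp, (Q' _).2 _ hp'⟩)
  obtain rfl : c = c' := funext fun a => by
    obtain ⟨p, hp, hap⟩ := (Q (c a)).1.exists_mem (mem_filter.2 ⟨mem_univ a, rfl⟩)
    obtain ⟨j, hpj⟩ := (hparts p).1 ⟨_, hp⟩
    rw [hcolor hp hpj]
    exact (mem_filter.1 ((Q' j).1.le hpj hap)).2.symm
  congr 1
  funext i
  refine Subtype.ext (Finpartition.ext (Finset.ext fun p => ⟨fun hp => ?_, fun hp => ?_⟩))
  · obtain ⟨j, hpj⟩ := (hparts p).1 ⟨i, hp⟩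
    rwa [hcolor hp hpj]
  · obtain ⟨j, hpj⟩ := (hparts p).2 ⟨i, hp⟩
    rwa [← hcolor hpj hp]

lemma toFinpartition_surjective (hS : Pairwise fun i j => Disjoint (S i) (S j)) :
    Function.Surjective (toFinpartition (S := S) (α := α)) := by
  classical
  rintro ⟨P, hP⟩
  choose c hc using fun a => Set.mem_iUnion.1 (hP _ (P.part_mem.2 (mem_univ a)))
  have hcolor : ∀ {p i a}, p ∈ P.parts → a ∈ p → (#p ∈ S i ↔ c a = i) := by
    intro p i a hp hap
    rw [← P.part_eq_of_mem hp hap]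
    exact ⟨fun h => hS.eq (Set.not_disjoint_iff.2 ⟨_, hc a, h⟩), fun h => h ▸ hc a⟩
  have hsup : ∀ i, {p ∈ P.parts | #p ∈ S i}.sup id = ({a | c a = i} : Finset α) := by
    intro i
    ext a
    simp only [mem_sup, mem_filter, id, mem_univ, true_and]
    constructor
    · rintro ⟨p, ⟨hp, hpi⟩, hap⟩
      exact (hcolor hp hap).1 hpi
    · intro hai
      obtain ⟨p, hp, hap⟩ := P.exists_mem (mem_univ a)
      exact ⟨p, ⟨hp, (hcolor hp hap).2 hai⟩, hap⟩
  refine ⟨⟨c, fun i => ⟨P.ofSubset (filter_subset _ _) (hsup i), fun p hp => (mem_filter.1 hp).2⟩⟩,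
    Subtype.ext (Finpartition.ext (Finset.ext fun p => ?_))⟩
  simp only [toFinpartition, parts_combineFibers, ofSubset_parts, mem_biUnion, mem_univ, true_and,
    mem_filter]
  exact ⟨fun ⟨_, hp, _⟩ => hp, fun hp => ⟨_, hp, (Set.mem_iUnion.1 (hP p hp)).choose_spec⟩⟩

end ColoredFinpartition

theorem statement18_general {ι : Type*} [Fintype ι] [DecidableEq ι] (S : ι → Set ℕ)
    (hdisj : Pairwise fun i j => Disjoint (S i) (S j)) (n : ℕ) :
    genB (⋃ i, S i) n =
      ∑ k ∈ Finset.piAntidiag (Finset.univ : Finset ι) n,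
        Nat.multinomial Finset.univ k * ∏ i, genB (S i) (k i) := by
  let e : ColoredFinpartition S (Fin n) ≃ _ := .ofBijective _
    ⟨ColoredFinpartition.toFinpartition_injective hdisj,
      ColoredFinpartition.toFinpartition_surjective hdisj⟩
  calc genB (⋃ i, S i) n = Nat.card (ColoredFinpartition S (Fin n)) := (Nat.card_congr e).symm
    _ = ∑ c : Fin n → ι, ∏ i, genB (S i) #{a | c a = i} := by
      simp only [Nat.card_sigma, Nat.card_pi, nat_card_finpartition_eq_genB]
    _ = _ := by
      rw [sum_fun_eq_sum_piAntidiag_multinomial (fun k => ∏ i, genB (S i) (k i)), Fintype.card_fin]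
      simp only [smul_eq_mul]

theorem statement18 {ι : Type*} [Fintype ι] [DecidableEq ι] (S : ι → Set ℕ)
    (hS : ∀ i, 0 ∉ S i) (hdisj : Pairwise fun i j => Disjoint (S i) (S j)) (n : ℕ) :
    genB (⋃ i, S i) n =
      ∑ k ∈ Finset.piAntidiag (Finset.univ : Finset ι) n,
        Nat.multinomial Finset.univ k * ∏ i, genB (S i) (k i) :=
  statement18_general S hdisj n
end

section
/- Let p be a prime, let ι be a finite index type, and let S : ι → Set ℕ be a family of pairwise disjoint sets of positive integers. Then B_{p, ⋃_i S_i} ≡ ∑_i B_{p, S_i} (mod p). -/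
/-!
The cyclic group of order `p` rotates `Fin p` and hence acts on the partitions counted by
`B_{p,S}`. For a `p`-group the number of points is congruent mod `p` to the number of fixed
points. The stabiliser of a block of an invariant partition has order `1` or `p`, so the block
is a singleton or everything: the only invariant partitions are the discrete and the indiscrete
one. Hence `B_{p,S} ≡ [1 ∈ S] + [p ∈ S] (mod p)`, and the right-hand side is additive over
disjoint unions.
-/

open Finset MulAction
open scoped Pointwise

namespace Finpartition

variable {α : Type*} [DecidableEq α]

theorem parts_top {s : Finset α} (hs : s.Nonempty) : (⊤ : Finpartition s).parts = {s} :=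
  congrArg Finpartition.parts (dif_neg hs.ne_empty)

variable [Fintype α] {G : Type*} [Group G] [MulAction G α]

def smulOrderIso (g : G) : Finset α ≃o Finset α where
  toEquiv := MulAction.toPerm g
  map_rel_iff' := smul_finset_subset_smul_finset_iff

instance : SMul G (Finpartition (univ : Finset α)) where
  smul g P := (P.map (smulOrderIso g)).copy smul_finset_univ

theorem parts_smul (g : G) (P : Finpartition (univ : Finset α)) :
    (g • P).parts = g • P.parts := by
  change (P.map (smulOrderIso g)).parts = _
  rw [parts_map, map_eq_image, smul_finset_def]
  rfl

instance : MulAction G (Finpartition (univ : Finset α)) where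
  one_smul P := Finpartition.ext (by rw [parts_smul, one_smul])
  mul_smul g h P := Finpartition.ext (by rw [parts_smul, parts_smul, parts_smul, mul_smul])

theorem smul_mem_parts {g : G} {P : Finpartition (univ : Finset α)} {b : Finset α}
    (hb : b ∈ P.parts) : g • b ∈ (g • P).parts := by
  rw [parts_smul]
  exact smul_mem_smul_finset hb

theorem smul_bot (g : G) : g • (⊥ : Finpartition (univ : Finset α)) = ⊥ := by
  ext t
  simp only [parts_smul, mem_smul_finset, parts_bot, mem_map, mem_univ, true_and,
    Function.Embedding.coeFn_mk, exists_exists_eq_and, smul_finset_singleton]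
  exact ⟨fun ⟨a, h⟩ => ⟨g • a, h⟩, fun ⟨a, h⟩ => ⟨g⁻¹ • a, by rwa [smul_inv_smul]⟩⟩

theorem smul_top [Nonempty α] (g : G) : g • (⊤ : Finpartition (univ : Finset α)) = ⊤ := by
  ext t
  rw [parts_smul, parts_top univ_nonempty, smul_finset_singleton, smul_finset_univ]

variable (α G) in
def partCardIn (S : Set ℕ) : SubMulAction G (Finpartition (univ : Finset α)) where
  carrier := {P | ∀ b ∈ P.parts, #b ∈ S}
  smul_mem' g P hP b hb := by
    rw [parts_smul, mem_smul_finset] at hb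
    obtain ⟨c, hc, rfl⟩ := hb
    rw [card_smul_finset]
    exact hP c hc

theorem bot_mem_partCardIn_iff [Nonempty α] {S : Set ℕ} :
    ⊥ ∈ partCardIn α G S ↔ 1 ∈ S := by
  change (∀ b ∈ (⊥ : Finpartition (univ : Finset α)).parts, #b ∈ S) ↔ _
  constructor
  · obtain ⟨a⟩ := ‹Nonempty α›
    intro h
    simpa using h {a} (mem_bot_iff.2 ⟨a, mem_univ a, rfl⟩)
  · intro h b hb
    obtain ⟨a, -, rfl⟩ := mem_bot_iff.1 hb
    rwa [card_singleton]

theorem top_mem_partCardIn_iff [Nonempty α] {S : Set ℕ} :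
    ⊤ ∈ partCardIn α G S ↔ Fintype.card α ∈ S := by
  change (∀ b ∈ (⊤ : Finpartition (univ : Finset α)).parts, #b ∈ S) ↔ _
  simp only [parts_top univ_nonempty, mem_singleton, forall_eq, card_univ]

theorem bot_ne_top (hα : 1 < Fintype.card α) :
    (⊥ : Finpartition (univ : Finset α)) ≠ ⊤ := by
  have : Nonempty α := Fintype.card_pos_iff.1 (by omega)
  intro h
  have huniv : univ ∈ (⊥ : Finpartition (univ : Finset α)).parts := by
    rw [h, parts_top univ_nonempty]
    exact mem_singleton_self _
  obtain ⟨a, -, ha⟩ := mem_bot_iff.1 huniv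
  have hcard := congrArg card ha
  rw [card_singleton, card_univ] at hcard
  omega

variable [IsPretransitive G α]

theorem card_eq_one_or_eq_univ_of_mem_parts (hG : (Nat.card G).Prime)
    {P : Finpartition (univ : Finset α)} (hP : ∀ g : G, g • P = P) {b : Finset α}
    (hb : b ∈ P.parts) : #b = 1 ∨ b = univ := by
  have : Fact (Nat.card G).Prime := ⟨hG⟩
  obtain ⟨x, hx⟩ := P.nonempty_of_mem_parts hb
  rcases (stabilizer G b).eq_bot_or_eq_top_of_prime_card with hstab | hstab
  · left
    refine card_eq_one.2 ⟨x, eq_singleton_iff_unique_mem.2 ⟨hx, fun y hy => ?_⟩⟩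
    obtain ⟨g, rfl⟩ := exists_smul_eq G x y
    have hgb : g • b = b := by
      have hgb_mem := smul_mem_parts (g := g) hb
      rw [hP g] at hgb_mem
      exact P.eq_of_mem_parts hgb_mem hb (smul_mem_smul_finset hx) hy
    have hg : g ∈ stabilizer G b := hgb
    rw [hstab, Subgroup.mem_bot] at hg
    rw [hg, one_smul]
  · right
    refine eq_univ_of_forall fun y => ?_
    obtain ⟨g, rfl⟩ := exists_smul_eq G x y
    have hg : g ∈ stabilizer G b := hstab ▸ Subgroup.mem_top g
    rw [← mem_stabilizer_iff.1 hg]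
    exact smul_mem_smul_finset hx

theorem eq_bot_or_eq_top_of_smul_eq (hG : (Nat.card G).Prime)
    {P : Finpartition (univ : Finset α)} (hP : ∀ g : G, g • P = P) : P = ⊥ ∨ P = ⊤ := by
  by_cases huniv : univ ∈ P.parts
  · right
    ext t
    rw [parts_top (P.nonempty_of_mem_parts huniv), mem_singleton]
    refine ⟨fun ht => ?_, fun ht => ht ▸ huniv⟩
    obtain ⟨x, hx⟩ := P.nonempty_of_mem_parts ht
    exact P.eq_of_mem_parts ht huniv hx (mem_univ x)
  · left
    have hsingleton : ∀ t ∈ P.parts, ∃ x, t = {x} := fun t ht =>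
      card_eq_one.1 <| (card_eq_one_or_eq_univ_of_mem_parts hG hP ht).resolve_right
        (ne_of_mem_of_not_mem ht huniv)
    ext t
    rw [mem_bot_iff]
    constructor
    · intro ht
      obtain ⟨x, rfl⟩ := hsingleton t ht
      exact ⟨x, mem_univ x, rfl⟩
    · rintro ⟨x, -, rfl⟩
      have hx := P.part_mem.2 (mem_univ x)
      obtain ⟨y, hy⟩ := hsingleton _ hx
      have hxy : x ∈ ({y} : Finset α) := hy ▸ P.mem_part (mem_univ x)
      rwa [hy, ← mem_singleton.1 hxy] at hx

theorem card_fixedPoints_partCardIn (hG : (Nat.card G).Prime) (hα : 1 < Fintype.card α)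
    (S : Set ℕ) :
    Nat.card (fixedPoints G (partCardIn α G S))
      = S.indicator 1 1 + S.indicator 1 (Fintype.card α) := by
  classical
  have : Nonempty α := Fintype.card_pos_iff.1 (by omega)
  have hfix (P : partCardIn α G S) :
      P ∈ fixedPoints G _ ↔ (P : Finpartition (univ : Finset α)) ∈ ({⊥, ⊤} : Finset _) := by
    rw [mem_fixedPoints, mem_insert, mem_singleton]
    constructor
    · exact fun h => eq_bot_or_eq_top_of_smul_eq hG fun g => congrArg Subtype.val (h g)
    · rintro (h | h) g <;> ext1 <;> simp [h, smul_bot, smul_top]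
  calc Nat.card (fixedPoints G (partCardIn α G S))
      = Nat.card (({⊥, ⊤} : Finset (Finpartition (univ : Finset α))).filter
          (· ∈ partCardIn α G S)) :=
        Nat.card_congr
          { toFun P := ⟨P.1.1, mem_filter.2 ⟨(hfix _).1 P.2, P.1.2⟩⟩
            invFun P := ⟨⟨P.1, (mem_filter.1 P.2).2⟩, (hfix _).2 (mem_filter.1 P.2).1⟩ }
    _ = S.indicator 1 1 + S.indicator 1 (Fintype.card α) := by
      rw [Nat.card_eq_finsetCard, card_filter, sum_pair (bot_ne_top hα)]
      simp only [Set.indicator_apply, Pi.one_apply, bot_mem_partCardIn_iff,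
        top_mem_partCardIn_iff]

end Finpartition

theorem genB_prime_modEq {p : ℕ} (hp : p.Prime) (S : Set ℕ) :
    genB S p ≡ S.indicator 1 1 + S.indicator 1 p [MOD p] := by
  have : Fact p.Prime := ⟨hp⟩
  have : NeZero p := ⟨hp.ne_zero⟩
  have : IsPretransitive (Multiplicative (Fin p)) (Fin p) :=
    ⟨fun x y => ⟨.ofAdd (y - x), by rw [ofAdd_smul, vadd_eq_add, sub_add_cancel]⟩⟩
  have hG : Nat.card (Multiplicative (Fin p)) = p := by simp
  have hpGroup : IsPGroup p (Multiplicative (Fin p)) := .of_card (n := 1) (by rw [hG, pow_one])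
  -- `genB S p` is, by definition, the cardinality of this sub-action
  have hcard := hpGroup.card_modEq_card_fixedPoints
    (Finpartition.partCardIn (Fin p) (Multiplicative (Fin p)) S)
  rwa [Finpartition.card_fixedPoints_partCardIn (by rwa [hG]) (by simpa using hp.one_lt),
    Fintype.card_fin] at hcard

theorem statement19_general {ι : Type*} [Fintype ι] (p : ℕ) (hp : p.Prime) (S : ι → Set ℕ)
    (hdisj : Pairwise fun i j => Disjoint (S i) (S j)) :
    genB (⋃ i, S i) p ≡ ∑ i, genB (S i) p [MOD p] := by
  have hunion (m : ℕ) : (⋃ i, S i).indicator (1 : ℕ → ℕ) m = ∑ i, (S i).indicator 1 m := by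
    simpa using Finset.indicator_biUnion_apply univ S (fun i _ j _ hij => hdisj hij) m
  calc genB (⋃ i, S i) p
      ≡ (⋃ i, S i).indicator 1 1 + (⋃ i, S i).indicator 1 p [MOD p] := genB_prime_modEq hp _
    _ = ∑ i, ((S i).indicator 1 1 + (S i).indicator 1 p) := by
      rw [sum_add_distrib, hunion, hunion]
    _ ≡ ∑ i, genB (S i) p [MOD p] := Nat.ModEq.sum fun i _ => (genB_prime_modEq hp (S i)).symm

theorem statement19 {ι : Type*} [Fintype ι] (p : ℕ) (hp : p.Prime) (S : ι → Set ℕ)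
    (hS : ∀ i, 0 ∉ S i) (hdisj : Pairwise fun i j => Disjoint (S i) (S j)) :
    genB (⋃ i, S i) p ≡ ∑ i, genB (S i) p [MOD p] :=
  statement19_general p hp S hdisj
end
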